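/- arXiv:2301.01818 — 12 statements merged into one kernel-verified Lean document; each statement's English description precedes it below -/
import Mathlib

section
/- Let V be a finite-dimensional real inner-product-normed space, a : V × V → ℝ a bilinear form satisfying a(v,v) ≥ α‖v‖² for some α > 0, and D : V → Q a linear map into an inner product space Q with image W = D(V). Then the 'Stokes system': find (u, q) ∈ V × W such that a(u, v) − ⟨q, Dv⟩ = L₁(v) for all v ∈ V and −⟨r, Du⟩ = L₂(r) for all r ∈ W, is uniquely solvable for all linear functionals L₁ on V and L₂ on W. -/
open scoped RealInnerProductSpace

/-- unique solvability of the finite-dimensional Stokes system. -/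
theorem stokes_system_uniquely_solvable {V Q : Type*}
    [NormedAddCommGroup V] [InnerProductSpace ℝ V] [FiniteDimensional ℝ V]
    [NormedAddCommGroup Q] [InnerProductSpace ℝ Q]
    (a : V →ₗ[ℝ] V →ₗ[ℝ] ℝ) (α : ℝ) (hα : 0 < α)
    (hcoer : ∀ v : V, α * ‖v‖ ^ 2 ≤ a v v)
    (D : V →ₗ[ℝ] Q)
    (L₁ : V →ₗ[ℝ] ℝ) (L₂ : ↥(LinearMap.range D) →ₗ[ℝ] ℝ) :
    ∃! uq : V × ↥(LinearMap.range D),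
      (∀ v : V, a uq.1 v - ⟪(uq.2 : Q), D v⟫ = L₁ v) ∧
      (∀ r : ↥(LinearMap.range D), -⟪(r : Q), D uq.1⟫ = L₂ r) := by
  let W := LinearMap.range D
  let F : V × ↥W →ₗ[ℝ] Module.Dual ℝ V :=
    { toFun := fun p => a p.1 - ((innerₗ Q p.2.val).comp D)
      map_add' := by
        intro p p'
        ext v
        simp [inner_add_left]
        ring
      map_smul' := by
        intro c p
        ext v
        simp [real_inner_smul_left]
        ring }
  let G : V × ↥W →ₗ[ℝ] Module.Dual ℝ ↥W :=
    { toFun := fun p => -(((innerₗ Q).flip (D p.1)).comp W.subtype)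
      map_add' := by
        intro p p'
        ext r
        simp [inner_add_right]
        ring
      map_smul' := by
        intro c p
        ext r
        simp [real_inner_smul_right] }
  let T := F.prod G
  have hinj : Function.Injective T := by
    rw [injective_iff_map_eq_zero]
    intro p hp
    have h1 : ∀ v : V, a p.1 v - ⟪(p.2 : Q), D v⟫ = 0 := by
      intro v
      have := congrArg Prod.fst hp
      exact congrFun (congrArg DFunLike.coe this) v
    have h2 : ∀ r : ↥W, -⟪(r : Q), D p.1⟫ = 0 := by
      intro r
      have := congrArg Prod.snd hp
      exact congrFun (congrArg DFunLike.coe this) r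
    have hDu : D p.1 = 0 := by
      have := h2 ⟨D p.1, ⟨p.1, rfl⟩⟩
      simp at this
      exact this
    have hu : p.1 = 0 := by
      have h0 : a p.1 p.1 = 0 := by
        have := h1 p.1
        rw [hDu] at this
        simpa using this
      have hle : α * ‖p.1‖ ^ 2 ≤ 0 := h0 ▸ hcoer p.1
      have hsq : ‖p.1‖ ^ 2 ≤ 0 := by nlinarith
      have : ‖p.1‖ = 0 := by nlinarith [norm_nonneg p.1, sq_nonneg ‖p.1‖]
      exact norm_eq_zero.mp this
    have hq : p.2 = 0 := by
      obtain ⟨v, hv⟩ := p.2.2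
      have := h1 v
      rw [hu] at this
      simp at this
      rw [hv] at this
      have : (p.2 : Q) = 0 := (inner_self_eq_zero (𝕜 := ℝ)).mp this
      exact Subtype.ext this
    exact Prod.ext hu hq
  have hfr : Module.finrank ℝ (V × ↥W) =
      Module.finrank ℝ (Module.Dual ℝ V × Module.Dual ℝ ↥W) := by
    simp [Module.finrank_prod, Subspace.dual_finrank_eq]
  have hsurj : Function.Surjective T :=
    (LinearMap.injective_iff_surjective_of_finrank_eq_finrank hfr).mp hinj
  obtain ⟨p, hp⟩ := hsurj (L₁, L₂)
  have key : ∀ q : V × ↥W, T q = (L₁, L₂) ↔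
      ((∀ v : V, a q.1 v - ⟪(q.2 : Q), D v⟫ = L₁ v) ∧
       (∀ r : ↥W, -⟪(r : Q), D q.1⟫ = L₂ r)) := by
    intro q
    constructor
    · intro h
      constructor
      · intro v
        have := congrArg Prod.fst h
        exact congrFun (congrArg DFunLike.coe this) v
      · intro r
        have := congrArg Prod.snd h
        exact congrFun (congrArg DFunLike.coe this) r
    · rintro ⟨h1, h2⟩
      refine Prod.ext ?_ ?_
      · ext v; exact h1 v
      · ext r; exact h2 r
  refine ⟨p, (key p).mp hp, ?_⟩
  intro q hq
  exact hinj (((key q).mpr hq).trans hp.symm)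
end

section
/- Let V be a finite-dimensional real vector space, a : V × V → ℝ a coercive bilinear form (a(v,v) ≥ α‖v‖², α > 0), Q an inner product space, D : V → Q linear, and I ⊆ V a subspace. Define N := {v ∈ I : Dv = 0} and X̃_B := {v ∈ V : a(v, z) = 0 for all z ∈ N, and ⟨Dv, Dw⟩ = 0 for all w ∈ I}. Then V = I ⊕ X̃_B (internal direct sum). -/
open scoped RealInnerProductSpace

open Module Submodule LinearMap

set_option maxHeartbeats 1000000 in
/-- `V = I ⊕ X̃_B` — every `v ∈ V` decomposes uniquely as a sum of an
interior part (in `I`) and a boundary part (in `X̃_B`). -/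
theorem interior_boundary_decomposition {V Q : Type*}
    [NormedAddCommGroup V] [InnerProductSpace ℝ V] [FiniteDimensional ℝ V]
    [NormedAddCommGroup Q] [InnerProductSpace ℝ Q]
    (a : V →ₗ[ℝ] V →ₗ[ℝ] ℝ) (α : ℝ) (hα : 0 < α)
    (hcoer : ∀ v : V, α * ‖v‖ ^ 2 ≤ a v v)
    (D : V →ₗ[ℝ] Q) (I : Submodule ℝ V) :
    ∀ v : V, ∃! p : V × V,
      p.1 ∈ I ∧
      ((∀ z ∈ I, D z = 0 → a p.2 z = 0) ∧ (∀ w ∈ I, ⟪D p.2, D w⟫ = 0)) ∧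
      v = p.1 + p.2 := by
  classical
  set N : Submodule ℝ V := I ⊓ LinearMap.ker D with hN
  set M : Submodule ℝ Q := I.map D with hM
  haveI : FiniteDimensional ℝ M := by
    rw [hM, ← LinearMap.range_domRestrict]
    infer_instance
  set Φ1 : V →ₗ[ℝ] Module.Dual ℝ N := a.compl₂ N.subtype with hΦ1
  set Φ2 : V →ₗ[ℝ] M := (orthogonalProjection M).toLinearMap ∘ₗ D with hΦ2
  set Φ : V →ₗ[ℝ] Module.Dual ℝ N × M := Φ1.prod Φ2 with hΦ
  set X : Submodule ℝ V := LinearMap.ker Φ with hX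
  -- characterization of membership in X
  have hmemX : ∀ u : V, u ∈ X ↔
      ((∀ z ∈ I, D z = 0 → a u z = 0) ∧ (∀ w ∈ I, ⟪D u, D w⟫ = 0)) := by
    intro u
    rw [hX, LinearMap.mem_ker, hΦ]
    have hsplit : Φ1.prod Φ2 u = 0 ↔ Φ1 u = 0 ∧ Φ2 u = 0 := by
      simp [LinearMap.prod_apply, Prod.ext_iff]
    rw [hsplit]
    constructor
    · rintro ⟨h1, h2⟩
      constructor
      · intro z hz hDz
        have := LinearMap.congr_fun h1 ⟨z, hz, hDz⟩
        simpa [hΦ1] using this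
      · intro w hw
        have hDu : D u ∈ Mᗮ := by
          rw [← orthogonalProjection_eq_zero_iff]
          exact h2
        have := hDu (D w) ⟨w, hw, rfl⟩
        rw [real_inner_comm]
        exact this
    · rintro ⟨h1, h2⟩
      constructor
      · ext z
        simpa [hΦ1] using h1 z.1 z.2.1 z.2.2
      · rw [hΦ2]
        simp only [LinearMap.coe_comp, ContinuousLinearMap.coe_coe, Function.comp_apply]
        rw [orthogonalProjection_eq_zero_iff]
        rintro q ⟨w, hw, rfl⟩
        rw [real_inner_comm]
        exact h2 w hw
  -- intersection is trivial
  have hinf : I ⊓ X = ⊥ := by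
    rw [eq_bot_iff]
    intro u hu
    rw [Submodule.mem_inf] at hu
    obtain ⟨huI, huX⟩ := hu
    rw [hmemX] at huX
    have hDu : D u = 0 := by
      have := huX.2 u huI
      rwa [real_inner_self_eq_norm_sq, pow_eq_zero_iff two_ne_zero, norm_eq_zero] at this
    have hau : a u u = 0 := huX.1 u huI hDu
    have hle := hcoer u
    rw [hau] at hle
    have hn : ‖u‖ = 0 := by
      by_contra h
      have hpos : 0 < ‖u‖ := (norm_nonneg u).lt_of_ne (Ne.symm h)
      nlinarith [mul_pos hα (pow_pos hpos 2)]
    rw [Submodule.mem_bot]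
    exact norm_eq_zero.mp hn
  -- dimension count
  have hrankI : finrank ℝ N + finrank ℝ M = finrank ℝ I := by
    have h1 : finrank ℝ (LinearMap.range (D.domRestrict I))
        + finrank ℝ (LinearMap.ker (D.domRestrict I)) = finrank ℝ I :=
      LinearMap.finrank_range_add_finrank_ker _
    have h2 : LinearMap.range (D.domRestrict I) = M := LinearMap.range_domRestrict I D
    have h3 : LinearMap.ker (D.domRestrict I) = Submodule.comap I.subtype N := by
      rw [LinearMap.ker_domRestrict, hN, Submodule.comap_inf, Submodule.comap_subtype_self,
        top_inf_eq]
    have h4 : finrank ℝ (Submodule.comap I.subtype N) = finrank ℝ N := by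
      have : N ≤ I := inf_le_left
      exact LinearEquiv.finrank_eq (Submodule.comapSubtypeEquivOfLe this)
    rw [h2, h3, h4] at h1
    omega
  have hrankX : finrank ℝ V ≤ finrank ℝ X + (finrank ℝ N + finrank ℝ M) := by
    have h1 : finrank ℝ (LinearMap.range Φ) + finrank ℝ X = finrank ℝ V :=
      LinearMap.finrank_range_add_finrank_ker Φ
    have h2 : finrank ℝ (LinearMap.range Φ) ≤ finrank ℝ (Module.Dual ℝ N × M) :=
      (LinearMap.range Φ).finrank_le
    have h3 : finrank ℝ (Module.Dual ℝ N × M) = finrank ℝ N + finrank ℝ M := by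
      rw [Module.finrank_prod, Subspace.dual_finrank_eq]
    omega
  have hsup : I ⊔ X = ⊤ := by
    have h1 : finrank ℝ (I ⊔ X : Submodule ℝ V) + finrank ℝ (I ⊓ X : Submodule ℝ V)
        = finrank ℝ I + finrank ℝ X := Submodule.finrank_sup_add_finrank_inf_eq I X
    rw [hinf] at h1
    simp only [finrank_bot, add_zero] at h1
    apply Submodule.eq_top_of_finrank_eq
    have hle := Submodule.finrank_le (I ⊔ X)
    omega
  -- existence and uniqueness
  intro v
  have hv : v ∈ I ⊔ X := hsup ▸ Submodule.mem_top
  obtain ⟨u, hu, x, hx, huv⟩ := Submodule.mem_sup.mp hv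
  refine ⟨(u, x), ⟨hu, (hmemX x).mp hx, huv.symm⟩, ?_⟩
  rintro ⟨q1, q2⟩ ⟨hq1, hq2, hqv⟩
  have hq2' : q2 ∈ X := (hmemX q2).mpr hq2
  have hdiff : q1 - u ∈ I ⊓ X := by
    constructor
    · exact Submodule.sub_mem I hq1 hu
    · have heq : q1 - u = x - q2 := by
        rw [sub_eq_sub_iff_add_eq_add, add_comm x u]
        exact (huv.trans hqv).symm
      rw [heq]
      exact Submodule.sub_mem X hx hq2'
  rw [hinf, Submodule.mem_bot, sub_eq_zero] at hdiff
  have hq2x : q2 = x := by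
    have h := huv.trans hqv
    rw [hdiff] at h
    exact (add_left_cancel h).symm
  simp [hdiff, hq2x]
end

section
/- Let V be finite dimensional, a : V × V → ℝ bilinear with |a(u,v)| ≤ M‖u‖‖v‖ and a(v,v) ≥ α‖v‖² (M, α > 0), D : V → Q linear into an inner product space with inf-sup constant β > 0, i.e., β‖q‖ ≤ sup_{v≠0} ⟨Dv,q⟩/‖v‖ for all q ∈ D(V). Let I ⊆ V be a subspace, N := I ∩ ker D, and X̃_B := {v : a(v,z) = 0 ∀z ∈ N, ⟨Dv,r⟩ = 0 ∀r ∈ D(I)}. Then the pair (X̃_B, D(X̃_B)) satisfies the inf-sup condition with constant αβ/(M+α): for every r̃ ∈ D(X̃_B), (αβ/(M+α))‖r̃‖ ≤ sup_{0 ≠ ṽ ∈ X̃_B} ⟨Dṽ, r̃⟩/‖ṽ‖. -/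
open scoped RealInnerProductSpace

/-- The boundary space `X̃_B`. -/
def tildeXB {V Q : Type*}
    [NormedAddCommGroup V] [InnerProductSpace ℝ V]
    [NormedAddCommGroup Q] [InnerProductSpace ℝ Q]
    (a : V →ₗ[ℝ] V →ₗ[ℝ] ℝ) (D : V →ₗ[ℝ] Q) (I : Submodule ℝ V) : Set V :=
  {v : V | (∀ z ∈ I, D z = 0 → a v z = 0) ∧ (∀ w ∈ I, ⟪D v, D w⟫ = 0)}

section aux

variable {V Q : Type*}
    [NormedAddCommGroup V] [InnerProductSpace ℝ V] [FiniteDimensional ℝ V]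
    [NormedAddCommGroup Q] [InnerProductSpace ℝ Q]

set_option maxHeartbeats 1000000 in
/-- From the inf-sup condition, every `r` in the range of `D` has a preimage `w`
with `β * ‖w‖ ≤ ‖r‖`. -/
lemma aux_preimage (β : ℝ) (hβ : 0 < β) (D : V →ₗ[ℝ] Q)
    (hinfsup : ∀ q ∈ LinearMap.range D,
      β * ‖q‖ ≤ ⨆ v : {v : V // v ≠ 0}, ⟪D v.1, q⟫ / ‖v.1‖) :
    ∀ r ∈ LinearMap.range D, ∃ w : V, D w = r ∧ β * ‖w‖ ≤ ‖r‖ := by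
  intro r hr
  set E := LinearMap.range D with hE
  haveI : FiniteDimensional ℝ E := D.finiteDimensional_range
  set D' : V →ₗ[ℝ] E := D.rangeRestrict with hD'
  set S : E →ₗ[ℝ] V := LinearMap.adjoint D' with hS
  have key : ∀ (v : V) (q : E), ⟪v, S q⟫ = ⟪D v, (q : Q)⟫ := by
    intro v q
    have h1 : ⟪v, S q⟫ = ⟪D' v, q⟫ := LinearMap.adjoint_inner_right D' v q
    rw [h1]
    rfl
  -- Step A : β ‖q‖ ≤ ‖S q‖ for all q in E
  have stepA : ∀ q : E, β * ‖q‖ ≤ ‖S q‖ := by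
    intro q
    have h1 : β * ‖(q : Q)‖ ≤ ⨆ v : {v : V // v ≠ 0}, ⟪D v.1, (q : Q)⟫ / ‖v.1‖ :=
      hinfsup (q : Q) q.2
    have h2 : (⨆ v : {v : V // v ≠ 0}, ⟪D v.1, (q : Q)⟫ / ‖v.1‖) ≤ ‖S q‖ := by
      apply Real.iSup_le _ (norm_nonneg _)
      rintro ⟨v, hv⟩
      have hvpos : (0:ℝ) < ‖v‖ := norm_pos_iff.2 hv
      rw [div_le_iff₀ hvpos]
      calc ⟪D v, (q : Q)⟫ = ⟪v, S q⟫ := (key v q).symm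
        _ ≤ ‖v‖ * ‖S q‖ := real_inner_le_norm v (S q)
        _ = ‖S q‖ * ‖v‖ := by ring
    calc β * ‖q‖ = β * ‖(q : Q)‖ := rfl
      _ ≤ _ := le_trans h1 h2
  -- the Gram operator is bijective
  set G : E →ₗ[ℝ] E := D' ∘ₗ S with hG
  have hGq : ∀ q : E, ((G q : Q)) = D (S q) := fun q => rfl
  have hGinner : ∀ q : E, ⟪G q, q⟫ = ‖S q‖ ^ 2 := by
    intro q
    have : ⟪G q, q⟫ = ⟪(G q : Q), (q : Q)⟫ := rfl
    rw [this, hGq, ← key (S q) q, real_inner_self_eq_norm_sq]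
  have hGinj : Function.Injective G := by
    rw [← LinearMap.ker_eq_bot, LinearMap.ker_eq_bot']
    intro q hq
    have h1 : ‖S q‖ ^ 2 = 0 := by rw [← hGinner, hq, inner_zero_left]
    have h2 : β * ‖q‖ ≤ 0 := by
      have := stepA q
      nlinarith [norm_nonneg (S q)]
    have : ‖q‖ = 0 := le_antisymm (by nlinarith [norm_nonneg q]) (norm_nonneg q)
    exact norm_eq_zero.mp this
  have hGsurj : Function.Surjective G := (LinearMap.injective_iff_surjective).mp hGinj
  obtain ⟨q, hq⟩ := hGsurj ⟨r, hr⟩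
  refine ⟨S q, ?_, ?_⟩
  · have := congrArg (Subtype.val) hq
    rw [hGq] at this
    exact this
  · have hnr : ‖(⟨r, hr⟩ : E)‖ = ‖r‖ := rfl
    have h1 : ‖S q‖ ^ 2 = ⟪(⟨r, hr⟩ : E), q⟫ := by rw [← hGinner, hq]
    have h2 : ⟪(⟨r, hr⟩ : E), q⟫ ≤ ‖r‖ * ‖q‖ := by
      calc ⟪(⟨r, hr⟩ : E), q⟫ ≤ ‖(⟨r, hr⟩ : E)‖ * ‖q‖ := real_inner_le_norm _ _
        _ = ‖r‖ * ‖q‖ := by rw [hnr]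
    have h3 : β * ‖q‖ ≤ ‖S q‖ := stepA q
    have hw2 : ‖S q‖ ^ 2 ≤ ‖r‖ * ‖q‖ := h1.le.trans h2
    rcases eq_or_lt_of_le (norm_nonneg (S q)) with h | h
    · rw [← h, mul_zero]; exact norm_nonneg r
    · have h4 : β * ‖S q‖ ^ 2 ≤ β * (‖r‖ * ‖q‖) := mul_le_mul_of_nonneg_left hw2 hβ.le
      have h5 : ‖r‖ * (β * ‖q‖) ≤ ‖r‖ * ‖S q‖ := mul_le_mul_of_nonneg_left h3 (norm_nonneg r)
      have h6 : β * ‖S q‖ * ‖S q‖ ≤ ‖r‖ * ‖S q‖ := by nlinarith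
      exact le_of_mul_le_mul_right h6 h

/-- Finite-dimensional Lax–Milgram on the subspace `N`. -/
lemma aux_lax (a : V →ₗ[ℝ] V →ₗ[ℝ] ℝ) (M α : ℝ) (hM : 0 < M) (hα : 0 < α)
    (hbdd : ∀ u v : V, |a u v| ≤ M * ‖u‖ * ‖v‖)
    (hcoer : ∀ v : V, α * ‖v‖ ^ 2 ≤ a v v)
    (N : Submodule ℝ V) (w : V) :
    ∃ z ∈ N, (∀ n ∈ N, a z n = a w n) ∧ α * ‖z‖ ≤ M * ‖w‖ := by
  set T : N →ₗ[ℝ] Module.Dual ℝ N := (a.compl₂ N.subtype).comp N.subtype with hT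
  have hTapp : ∀ (z n : N), T z n = a (z : V) (n : V) := fun z n => rfl
  have hTinj : Function.Injective T := by
    rw [← LinearMap.ker_eq_bot, LinearMap.ker_eq_bot']
    intro z hz
    have h1 : a (z : V) (z : V) = 0 := by
      have := congrFun (congrArg DFunLike.coe hz) z
      simpa [hTapp] using this
    have h2 : α * ‖(z : V)‖ ^ 2 ≤ 0 := h1 ▸ hcoer (z : V)
    have h3 : ‖(z : V)‖ ^ 2 ≤ 0 := by nlinarith
    have h4 : ‖(z : V)‖ = 0 := sq_eq_zero_iff.mp (le_antisymm h3 (sq_nonneg _))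
    exact Subtype.ext (norm_eq_zero.mp h4)
  have hTsurj : Function.Surjective T :=
    (LinearMap.injective_iff_surjective_of_finrank_eq_finrank
      (Subspace.dual_finrank_eq).symm).mp hTinj
  obtain ⟨z, hz⟩ := hTsurj ((a w).comp N.subtype)
  refine ⟨(z : V), z.2, ?_, ?_⟩
  · intro n hn
    have := congrFun (congrArg DFunLike.coe hz) ⟨n, hn⟩
    simpa [hTapp] using this
  · have h1 : a (z : V) (z : V) = a w (z : V) := by
      have := congrFun (congrArg DFunLike.coe hz) z
      simpa [hTapp] using this
    have h2 : α * ‖(z : V)‖ ^ 2 ≤ a w (z : V) := h1 ▸ hcoer (z : V)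
    have h3 : a w (z : V) ≤ M * ‖w‖ * ‖(z : V)‖ := le_trans (le_abs_self _) (hbdd w (z : V))
    rcases eq_or_lt_of_le (norm_nonneg (z : V)) with h | h
    · rw [← h, mul_zero]; positivity
    · have := le_trans h2 h3
      nlinarith

end aux

/-- inf-sup stability of the pair `(X̃_B, D(X̃_B))` with constant
`αβ/(M+α)`. -/
theorem infSup_boundary {V Q : Type*}
    [NormedAddCommGroup V] [InnerProductSpace ℝ V] [FiniteDimensional ℝ V]
    [NormedAddCommGroup Q] [InnerProductSpace ℝ Q]
    (a : V →ₗ[ℝ] V →ₗ[ℝ] ℝ) (M α β : ℝ) (hM : 0 < M) (hα : 0 < α) (hβ : 0 < β)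
    (hbdd : ∀ u v : V, |a u v| ≤ M * ‖u‖ * ‖v‖)
    (hcoer : ∀ v : V, α * ‖v‖ ^ 2 ≤ a v v)
    (D : V →ₗ[ℝ] Q)
    (hinfsup : ∀ q ∈ LinearMap.range D,
      β * ‖q‖ ≤ ⨆ v : {v : V // v ≠ 0}, ⟪D v.1, q⟫ / ‖v.1‖)
    (I : Submodule ℝ V) :
    ∀ r ∈ D '' tildeXB a D I,
      (α * β / (M + α)) * ‖r‖ ≤
        ⨆ v : {v : V // v ∈ tildeXB a D I ∧ v ≠ 0}, ⟪D v.1, r⟫ / ‖v.1‖ := by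
  rintro r ⟨x, hxB, rfl⟩
  by_cases h0 : D x = 0
  · rw [h0]
    simp only [norm_zero, mul_zero]
    apply Real.iSup_nonneg
    rintro ⟨v, hv⟩
    simp
  -- main case
  obtain ⟨w, hw, hwb⟩ := aux_preimage β hβ D hinfsup (D x) ⟨x, rfl⟩
  set N : Submodule ℝ V := I ⊓ LinearMap.ker D with hN
  obtain ⟨z, hzN, hz, hzb⟩ := aux_lax a M α hM hα hbdd hcoer N w
  have hDz : D z = 0 := hzN.2
  set v : V := w - z with hv
  have hDv : D v = D x := by rw [hv, map_sub, hDz, sub_zero, hw]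
  have hvB : v ∈ tildeXB a D I := by
    constructor
    · intro n hn hDn
      have hnN : n ∈ N := ⟨hn, hDn⟩
      have : a v n = a w n - a z n := by rw [hv, map_sub, LinearMap.sub_apply]
      rw [this, hz n hnN, sub_self]
    · intro u hu
      rw [hDv]
      exact hxB.2 u hu
  have hvne : v ≠ 0 := fun h => h0 (by rw [← hDv, h, map_zero])
  have hvpos : (0:ℝ) < ‖v‖ := norm_pos_iff.2 hvne
  have hrpos : (0:ℝ) < ‖D x‖ := norm_pos_iff.2 h0
  -- bounded above
  set Dc : V →L[ℝ] Q := LinearMap.toContinuousLinearMap D with hDc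
  have hbdd' : BddAbove (Set.range fun u : {u : V // u ∈ tildeXB a D I ∧ u ≠ 0} =>
      ⟪D u.1, D x⟫ / ‖u.1‖) := by
    refine ⟨‖Dc‖ * ‖D x‖, ?_⟩
    rintro y ⟨⟨u, huB, hune⟩, rfl⟩
    have hupos : (0:ℝ) < ‖u‖ := norm_pos_iff.2 hune
    rw [div_le_iff₀ hupos]
    calc ⟪D u, D x⟫ ≤ ‖D u‖ * ‖D x‖ := real_inner_le_norm _ _
      _ ≤ (‖Dc‖ * ‖u‖) * ‖D x‖ := by
          have : ‖D u‖ = ‖Dc u‖ := rfl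
          rw [this]
          exact mul_le_mul_of_nonneg_right (Dc.le_opNorm u) (norm_nonneg _)
      _ = ‖Dc‖ * ‖D x‖ * ‖u‖ := by ring
  have hle : ⟪D v, D x⟫ / ‖v‖ ≤
      ⨆ u : {u : V // u ∈ tildeXB a D I ∧ u ≠ 0}, ⟪D u.1, D x⟫ / ‖u.1‖ :=
    le_ciSup hbdd' ⟨v, hvB, hvne⟩
  have hval : ⟪D v, D x⟫ / ‖v‖ = ‖D x‖ ^ 2 / ‖v‖ := by
    rw [hDv, real_inner_self_eq_norm_sq]
  refine le_trans ?_ (hval ▸ hle)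
  -- arithmetic
  have key : α * β * ‖v‖ ≤ (M + α) * ‖D x‖ := by
    have h1 : ‖v‖ ≤ ‖w‖ + ‖z‖ := norm_sub_le w z
    nlinarith [mul_le_mul_of_nonneg_left h1 (le_of_lt (mul_pos hα hβ)),
      mul_le_mul_of_nonneg_left hzb hβ.le,
      mul_le_mul_of_nonneg_left hwb (by positivity : (0:ℝ) ≤ M + α)]
  rw [le_div_iff₀ hvpos]
  have hMα : (0:ℝ) < M + α := by positivity
  calc α * β / (M + α) * ‖D x‖ * ‖v‖ = (α * β * ‖v‖) * ‖D x‖ / (M + α) := by ring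
    _ ≤ ((M + α) * ‖D x‖) * ‖D x‖ / (M + α) :=
        (div_le_div_iff_of_pos_right hMα).mpr (mul_le_mul_of_nonneg_right key (norm_nonneg _))
    _ = ‖D x‖ ^ 2 := by field_simp
end

section
/- Let S and S† be the Stokes extension and adjoint Stokes extension operators: for u ∈ V, Su − u ∈ I with a(Su, v) − ⟨q, Dv⟩ = 0 for all v ∈ I (some q ∈ D(I)) and ⟨r, D Su⟩ = 0 for all r ∈ D(I); S†u is defined analogously with a(v, S†u) − ⟨q†, Dv⟩ = 0. Then for all u, v ∈ V: a(Su, Sv) = a(Su, S†v) = a(S†u, S†v). -/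
open scoped RealInnerProductSpace

/-- `a(Su, Sv) = a(Su, S†v) = a(S†u, S†v)` for the Stokes extension
and adjoint Stokes extension operators. -/
theorem a_stokes_extension_adjoint_id {V Q : Type*}
    [NormedAddCommGroup V] [InnerProductSpace ℝ V] [FiniteDimensional ℝ V]
    [NormedAddCommGroup Q] [InnerProductSpace ℝ Q]
    (a : V →ₗ[ℝ] V →ₗ[ℝ] ℝ) (α : ℝ) (hα : 0 < α)
    (hcoer : ∀ w : V, α * ‖w‖ ^ 2 ≤ a w w)
    (D : V →ₗ[ℝ] Q) (I : Submodule ℝ V)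
    (u v Su Sv Sdu Sdv : V) (qu qv qdu qdv : Q)
    -- Stokes extension of u
    (hqu : qu ∈ Submodule.map D I) (hSu0 : Su - u ∈ I)
    (hSu1 : ∀ w ∈ I, a Su w - ⟪qu, D w⟫ = 0)
    (hSu2 : ∀ r ∈ Submodule.map D I, ⟪r, D Su⟫ = 0)
    -- Stokes extension of v
    (hqv : qv ∈ Submodule.map D I) (hSv0 : Sv - v ∈ I)
    (hSv1 : ∀ w ∈ I, a Sv w - ⟪qv, D w⟫ = 0)
    (hSv2 : ∀ r ∈ Submodule.map D I, ⟪r, D Sv⟫ = 0)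
    -- adjoint Stokes extension of u
    (hqdu : qdu ∈ Submodule.map D I) (hSdu0 : Sdu - u ∈ I)
    (hSdu1 : ∀ w ∈ I, a w Sdu - ⟪qdu, D w⟫ = 0)
    (hSdu2 : ∀ r ∈ Submodule.map D I, ⟪r, D Sdu⟫ = 0)
    -- adjoint Stokes extension of v
    (hqdv : qdv ∈ Submodule.map D I) (hSdv0 : Sdv - v ∈ I)
    (hSdv1 : ∀ w ∈ I, a w Sdv - ⟪qdv, D w⟫ = 0)
    (hSdv2 : ∀ r ∈ Submodule.map D I, ⟪r, D Sdv⟫ = 0) :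
    a Su Sv = a Su Sdv ∧ a Su Sdv = a Sdu Sdv := by
  have hmem1 : Sv - Sdv ∈ I := by
    have := I.sub_mem hSv0 hSdv0
    simpa [sub_sub_sub_cancel_right] using this
  have hmem2 : Su - Sdu ∈ I := by
    have := I.sub_mem hSu0 hSdu0
    simpa [sub_sub_sub_cancel_right] using this
  have h1 : a Su (Sv - Sdv) = ⟪qu, D (Sv - Sdv)⟫ := by
    have := hSu1 _ hmem1; linarith
  have h2 : a (Su - Sdu) Sdv = ⟪qdv, D (Su - Sdu)⟫ := by
    have := hSdv1 _ hmem2; simp only [map_sub, LinearMap.sub_apply] at *; linarith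
  have e1 : (⟪qu, D (Sv - Sdv)⟫ : ℝ) = 0 := by
    rw [map_sub, inner_sub_right, hSv2 qu hqu, hSdv2 qu hqu, sub_zero]
  have e2 : (⟪qdv, D (Su - Sdu)⟫ : ℝ) = 0 := by
    rw [map_sub, inner_sub_right, hSu2 qdv hqdv, hSdu2 qdv hqdv, sub_zero]
  rw [e1] at h1; rw [e2] at h2
  simp only [map_sub, LinearMap.sub_apply] at h1 h2
  constructor <;> linarith
end

section
/- With X̃_B := {v ∈ V : a(v,z) = 0 ∀z ∈ N, ⟨Dv,r⟩ = 0 ∀r ∈ D(I)} and the Stokes extension operator S defined via the local Stokes systems, there holds X̃_B = {v ∈ V : Sv = v} = {Sv : v ∈ V}. In particular, S is a projection of V onto X̃_B. -/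
open scoped RealInnerProductSpace

/-- `X̃_B` is exactly the fixed-point set and the range of the Stokes
extension operator `S`, so `S` is a projection of `V` onto `X̃_B`. -/
theorem tildeXB_eq_fixedPoints_eq_range {V Q : Type*}
    [NormedAddCommGroup V] [InnerProductSpace ℝ V] [FiniteDimensional ℝ V]
    [NormedAddCommGroup Q] [InnerProductSpace ℝ Q]
    (a : V →ₗ[ℝ] V →ₗ[ℝ] ℝ) (α : ℝ) (hα : 0 < α)
    (hcoer : ∀ w : V, α * ‖w‖ ^ 2 ≤ a w w)
    (D : V →ₗ[ℝ] Q) (I : Submodule ℝ V)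
    (S : V → V)
    (hS : ∀ u : V, (S u - u ∈ I) ∧
      (∃ q ∈ Submodule.map D I, ∀ v ∈ I, a (S u) v - ⟪q, D v⟫ = 0) ∧
      (∀ r ∈ Submodule.map D I, ⟪r, D (S u)⟫ = 0)) :
    tildeXB a D I = {v : V | S v = v} ∧ tildeXB a D I = Set.range S := by
  -- coercivity: a w w ≤ 0 → w = 0
  have key : ∀ w : V, a w w ≤ 0 → w = 0 := by
    intro w hw
    by_contra hne
    have hp : 0 < ‖w‖ := norm_pos_iff.mpr hne
    nlinarith [hcoer w, mul_pos hα (mul_pos hp hp)]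
  -- tildeXB ⊆ fixed points
  have fix_of_mem : ∀ v, v ∈ tildeXB a D I → S v = v := by
    intro v hv
    obtain ⟨h1, h2⟩ := hv
    obtain ⟨hmem, ⟨q, hq, heq⟩, horth⟩ := hS v
    set w := S v - v with hwdef
    have hDw : D w = 0 := by
      have e1 : ⟪D w, D (S v)⟫ = 0 := horth (D w) ⟨w, hmem, rfl⟩
      have e2 : ⟪D v, D w⟫ = 0 := h2 w hmem
      have e3 : ⟪D w, D w⟫ = 0 := by
        have : D w = D (S v) - D v := by simp [hwdef]
        calc ⟪D w, D w⟫ = ⟪D w, D (S v)⟫ - ⟪D w, D v⟫ := by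
              rw [this]; rw [inner_sub_right]
          _ = 0 - ⟪D v, D w⟫ := by rw [e1, real_inner_comm]
          _ = 0 := by rw [e2]; ring
      exact inner_self_eq_zero.mp e3
    have haw : a w w = 0 := by
      have e4 : a (S v) w = 0 := by
        have := heq w hmem
        rw [hDw] at this
        simpa using this
      have e5 : a v w = 0 := h1 w hmem hDw
      have : a w w = a (S v) w - a v w := by
        simp [hwdef, map_sub, LinearMap.sub_apply]; ring
      rw [this, e4, e5]; ring
    have : w = 0 := key w (le_of_eq haw)
    exact sub_eq_zero.mp this
  -- fixed points ⊆ tildeXB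
  have mem_of_fix : ∀ v, S v = v → v ∈ tildeXB a D I := by
    intro v hv
    obtain ⟨_, ⟨q, hq, heq⟩, horth⟩ := hS v
    constructor
    · intro z hz hDz
      have := heq z hz
      rw [hDz, hv] at this
      simpa using this
    · intro u hu
      have := horth (D u) ⟨u, hu, rfl⟩
      rw [hv] at this
      rw [real_inner_comm]
      exact this
  -- S is idempotent
  have idem : ∀ u : V, S (S u) = S u := by
    intro u
    obtain ⟨_, ⟨q2, hq2, heq2⟩, horth2⟩ := hS u
    obtain ⟨hmem, ⟨q1, hq1, heq1⟩, horth1⟩ := hS (S u)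
    set w := S (S u) - S u with hwdef
    have hwI : w ∈ I := hmem
    have hqw : ∀ q' ∈ Submodule.map D I, ⟪q', D w⟫ = 0 := by
      intro q' hq'
      have e1 : ⟪q', D (S (S u))⟫ = 0 := horth1 q' hq'
      have e2 : ⟪q', D (S u)⟫ = 0 := horth2 q' hq'
      have : D w = D (S (S u)) - D (S u) := by simp [hwdef]
      rw [this, inner_sub_right, e1, e2]; ring
    have haw : a w w = 0 := by
      have e4 : a (S (S u)) w = ⟪q1, D w⟫ := by
        have := heq1 w hwI; linarith [this]
      have e5 : a (S u) w = ⟪q2, D w⟫ := by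
        have := heq2 w hwI; linarith [this]
      have : a w w = a (S (S u)) w - a (S u) w := by
        simp [hwdef, map_sub, LinearMap.sub_apply]; ring
      rw [this, e4, e5, hqw q1 hq1, hqw q2 hq2]; ring
    have : w = 0 := key w (le_of_eq haw)
    exact sub_eq_zero.mp this
  constructor
  · ext v
    exact ⟨fun h => fix_of_mem v h, fun h => mem_of_fix v h⟩
  · ext v
    constructor
    · intro h
      exact ⟨v, fix_of_mem v h⟩
    · rintro ⟨u, rfl⟩
      exact mem_of_fix (S u) (idem u)
end

section
/- Let Ñ_B := {z ∈ X̃_B : Dz = 0} and Ñ_B† := {z ∈ X̃_B† : Dz = 0}, where X̃_B and X̃_B† are the boundary space and its adjoint. Then the variational problem: find z ∈ Ñ_B such that a(z, w) = F(w) for all w ∈ Ñ_B†, is uniquely solvable for every linear functional F on Ñ_B†. -/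
open scoped RealInnerProductSpace

/-- The adjoint boundary space `X̃_B†`. -/
def tildeXBd {V Q : Type*}
    [NormedAddCommGroup V] [InnerProductSpace ℝ V]
    [NormedAddCommGroup Q] [InnerProductSpace ℝ Q]
    (a : V →ₗ[ℝ] V →ₗ[ℝ] ℝ) (D : V →ₗ[ℝ] Q) (I : Submodule ℝ V) : Set V :=
  {v : V | (∀ z ∈ I, D z = 0 → a z v = 0) ∧ (∀ w ∈ I, ⟪D v, D w⟫ = 0)}

section Aux

set_option linter.unusedSectionVars false

variable {V : Type*} [NormedAddCommGroup V] [InnerProductSpace ℝ V] [FiniteDimensional ℝ V]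

private lemma aux_zero_of_self {a : V →ₗ[ℝ] V →ₗ[ℝ] ℝ} {α : ℝ} (hα : 0 < α)
    (hcoer : ∀ w : V, α * ‖w‖ ^ 2 ≤ a w w) {z : V} (h : a z z = 0) : z = 0 := by
  have h1 := hcoer z
  rw [h] at h1
  have h2 : ‖z‖ ^ 2 = 0 := by nlinarith [sq_nonneg ‖z‖]
  have h3 : ‖z‖ = 0 := by
    have := pow_eq_zero_iff (n := 2) (by norm_num) |>.mp h2
    exact this
  exact norm_eq_zero.mp h3

/-- The self-pairing `N → Dual N` induced by a coercive bilinear form is bijective. -/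
private lemma aux_pair_bij (a : V →ₗ[ℝ] V →ₗ[ℝ] ℝ) {α : ℝ} (hα : 0 < α)
    (hcoer : ∀ w : V, α * ‖w‖ ^ 2 ≤ a w w) (N : Submodule ℝ V) :
    Function.Bijective ((a.compl₂ N.subtype).domRestrict N) := by
  have hinj : Function.Injective ((a.compl₂ N.subtype).domRestrict N) := by
    rw [← LinearMap.ker_eq_bot]
    rw [LinearMap.ker_eq_bot']
    intro n hn
    have h0 : a (↑n) (↑n) = 0 := by
      have := LinearMap.congr_fun hn n
      simpa using this
    have : (n : V) = 0 := aux_zero_of_self hα hcoer h0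
    exact Subtype.ext this
  refine ⟨hinj, ?_⟩
  have hfr : Module.finrank ℝ ↥N = Module.finrank ℝ (↥N →ₗ[ℝ] ℝ) :=
    (Subspace.dual_finrank_eq (K := ℝ) (V := ↥N)).symm
  exact (LinearMap.injective_iff_surjective_of_finrank_eq_finrank hfr).mp hinj

/-- Rank–nullity count for the left annihilator of `N` inside `W`. -/
private lemma aux_finrank (a : V →ₗ[ℝ] V →ₗ[ℝ] ℝ) {α : ℝ} (hα : 0 < α)
    (hcoer : ∀ w : V, α * ‖w‖ ^ 2 ≤ a w w) (N W : Submodule ℝ V) (hNW : N ≤ W) :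
    Module.finrank ℝ ↥(LinearMap.ker (a.compl₂ N.subtype) ⊓ W) + Module.finrank ℝ ↥N
      = Module.finrank ℝ ↥W := by
  set ψ : ↥W →ₗ[ℝ] (↥N →ₗ[ℝ] ℝ) := (a.compl₂ N.subtype).domRestrict W with hψ
  have hker : LinearMap.ker ψ
      = (LinearMap.ker (a.compl₂ N.subtype) ⊓ W).comap W.subtype := by
    ext x
    simp [hψ, LinearMap.mem_ker, Submodule.mem_comap, x.2]
  have hrange : LinearMap.range ψ = ⊤ := by
    rw [LinearMap.range_eq_top]
    intro f
    obtain ⟨n, hn⟩ := (aux_pair_bij a hα hcoer N).surjective f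
    exact ⟨⟨(n : V), hNW n.2⟩, hn⟩
  have h1 := LinearMap.finrank_range_add_finrank_ker ψ
  rw [hrange, hker] at h1
  have h2 : Module.finrank ℝ ↥((LinearMap.ker (a.compl₂ N.subtype) ⊓ W).comap W.subtype)
      = Module.finrank ℝ ↥(LinearMap.ker (a.compl₂ N.subtype) ⊓ W) :=
    (Submodule.comapSubtypeEquivOfLe inf_le_right).finrank_eq
  have h3 : Module.finrank ℝ ↥(⊤ : Submodule ℝ (↥N →ₗ[ℝ] ℝ))
      = Module.finrank ℝ ↥N := by
    rw [finrank_top]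
    exact Subspace.dual_finrank_eq (K := ℝ) (V := ↥N)
  omega

end Aux

/-- the variational problem on the divergence-free boundary spaces
`Ñ_B`, `Ñ_B†` is uniquely solvable for every linear functional. -/
theorem nb_problem_uniquely_solvable {V Q : Type*}
    [NormedAddCommGroup V] [InnerProductSpace ℝ V] [FiniteDimensional ℝ V]
    [NormedAddCommGroup Q] [InnerProductSpace ℝ Q]
    (a : V →ₗ[ℝ] V →ₗ[ℝ] ℝ) (α : ℝ) (hα : 0 < α)
    (hcoer : ∀ w : V, α * ‖w‖ ^ 2 ≤ a w w)
    (D : V →ₗ[ℝ] Q) (I : Submodule ℝ V)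
    (F : V →ₗ[ℝ] ℝ) :
    ∃! z : V, (z ∈ tildeXB a D I ∧ D z = 0) ∧
      ∀ w : V, (w ∈ tildeXBd a D I ∧ D w = 0) → a z w = F w := by
  classical
  -- coercivity for the flipped form
  have hcoer' : ∀ w : V, α * ‖w‖ ^ 2 ≤ a.flip w w := fun w => hcoer w
  set N : Submodule ℝ V := I ⊓ LinearMap.ker D with hN
  set W : Submodule ℝ V := LinearMap.ker D with hW
  have hNW : N ≤ W := inf_le_right
  set NB : Submodule ℝ V := LinearMap.ker (a.compl₂ N.subtype) ⊓ W with hNB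
  set NBd : Submodule ℝ V := LinearMap.ker (a.flip.compl₂ N.subtype) ⊓ W with hNBd
  -- membership characterizations
  have memNB : ∀ v : V, v ∈ NB ↔ (v ∈ tildeXB a D I ∧ D v = 0) := by
    intro v
    constructor
    · rintro ⟨h1, h2⟩
      have h2' : D v = 0 := h2
      refine ⟨⟨?_, ?_⟩, h2'⟩
      · intro z hz hDz
        have := LinearMap.congr_fun (LinearMap.mem_ker.mp h1) ⟨z, ⟨hz, hDz⟩⟩
        simpa using this
      · intro w _
        rw [h2']
        simp
    · rintro ⟨⟨h1, _⟩, h2⟩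
      refine ⟨?_, h2⟩
      simp only [SetLike.mem_coe, LinearMap.mem_ker]
      ext n
      simpa using h1 n n.2.1 n.2.2
  have memNBd : ∀ v : V, v ∈ NBd ↔ (v ∈ tildeXBd a D I ∧ D v = 0) := by
    intro v
    constructor
    · rintro ⟨h1, h2⟩
      have h2' : D v = 0 := h2
      refine ⟨⟨?_, ?_⟩, h2'⟩
      · intro z hz hDz
        have := LinearMap.congr_fun (LinearMap.mem_ker.mp h1) ⟨z, ⟨hz, hDz⟩⟩
        simpa using this
      · intro w _
        rw [h2']
        simp
    · rintro ⟨⟨h1, _⟩, h2⟩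
      refine ⟨?_, h2⟩
      simp only [SetLike.mem_coe, LinearMap.mem_ker]
      ext n
      simpa using h1 n n.2.1 n.2.2
  -- equal dimensions
  have hd1 := aux_finrank a hα hcoer N W hNW
  have hd2 := aux_finrank a.flip hα hcoer' N W hNW
  have hdim : Module.finrank ℝ ↥NB = Module.finrank ℝ ↥NBd := by
    rw [hNB, hNBd]; omega
  -- the operator T : NB → Dual NBd
  set T : ↥NB →ₗ[ℝ] (↥NBd →ₗ[ℝ] ℝ) := (a.compl₂ NBd.subtype).domRestrict NB with hT
  have hTinj : Function.Injective T := by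
    rw [← LinearMap.ker_eq_bot, LinearMap.ker_eq_bot']
    intro z hz
    -- build the test element w = z - n ∈ NBd
    obtain ⟨n, hn⟩ := (aux_pair_bij a.flip hα hcoer' N).surjective
      ((a.flip.compl₂ N.subtype) (z : V))
    have hn' : ∀ m : ↥N, a (↑m) (↑n) = a (↑m) (↑z) := by
      intro m
      have := LinearMap.congr_fun hn m
      simpa using this
    have hwmem : (z : V) - (n : V) ∈ NBd := by
      constructor
      · simp only [SetLike.mem_coe, LinearMap.mem_ker]
        ext m
        simp [LinearMap.compl₂_apply, hn' m]
      · have hz2 : D (z : V) = 0 := (z.2.2 : (z : V) ∈ W)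
        have hn2 : D (n : V) = 0 := hNW n.2
        simp [LinearMap.mem_ker, hW] at *
        simp [map_sub, hz2, hn2]
    have h0 : a (↑z) (↑z) - a (↑z) (↑n) = 0 := by
      have := LinearMap.congr_fun hz ⟨(z : V) - (n : V), hwmem⟩
      simpa [hT, LinearMap.domRestrict_apply, LinearMap.compl₂_apply, map_sub] using this
    have hzn : a (↑z) (↑n) = 0 := by
      have hz1 : (z : V) ∈ LinearMap.ker (a.compl₂ N.subtype) := z.2.1
      have := LinearMap.congr_fun (LinearMap.mem_ker.mp hz1) n
      simpa using this
    have hzz : a (↑z) (↑z) = 0 := by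
      rw [hzn, sub_zero] at h0
      exact h0
    exact Subtype.ext (aux_zero_of_self hα hcoer hzz)
  have hTbij : Function.Bijective T := by
    refine ⟨hTinj, ?_⟩
    have hfr : Module.finrank ℝ ↥NB = Module.finrank ℝ (↥NBd →ₗ[ℝ] ℝ) := by
      rw [hdim]
      exact (Subspace.dual_finrank_eq (K := ℝ) (V := ↥NBd)).symm
    exact (LinearMap.injective_iff_surjective_of_finrank_eq_finrank hfr).mp hTinj
  obtain ⟨z₀, hz₀⟩ := hTbij.surjective (F.domRestrict NBd)
  refine ⟨(z₀ : V), ⟨(memNB _).mp z₀.2, ?_⟩, ?_⟩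
  · intro w hw
    have hwm : w ∈ NBd := (memNBd w).mpr hw
    have := LinearMap.congr_fun hz₀ ⟨w, hwm⟩
    simpa [hT] using this
  · intro y ⟨hy1, hy2⟩
    have hym : y ∈ NB := (memNB y).mpr hy1
    have : T ⟨y, hym⟩ = F.domRestrict NBd := by
      ext w
      simpa [hT] using hy2 (↑w) ((memNBd ↑w).mp w.2)
    have := hTinj (this.trans hz₀.symm)
    exact congrArg Subtype.val this
end

section
/- Suppose u ∈ X̃_B satisfies a(u, z) = 0 for all z ∈ Ñ_B† := {z ∈ X̃_B† : Dz = 0}. Then ‖u‖ ≤ ((M+α)²/(α²β)) ‖Du‖, where M is the boundedness constant of a, α its coercivity constant, and β the inf-sup constant of D over V × D(V). -/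
open scoped RealInnerProductSpace

/-- if `u ∈ X̃_B` is a-orthogonal to `Ñ_B†`, then
`‖u‖ ≤ ((M+α)²/(α²β)) ‖Du‖`. -/
theorem orthog_divfree_tilde_bound {V Q : Type*}
    [NormedAddCommGroup V] [InnerProductSpace ℝ V] [FiniteDimensional ℝ V]
    [NormedAddCommGroup Q] [InnerProductSpace ℝ Q]
    (a : V →ₗ[ℝ] V →ₗ[ℝ] ℝ) (M α β : ℝ) (hM : 0 < M) (hα : 0 < α) (hβ : 0 < β)
    (hbdd : ∀ u v : V, |a u v| ≤ M * ‖u‖ * ‖v‖)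
    (hcoer : ∀ v : V, α * ‖v‖ ^ 2 ≤ a v v)
    (D : V →ₗ[ℝ] Q)
    (hinfsup : ∀ q ∈ LinearMap.range D,
      β * ‖q‖ ≤ ⨆ v : {v : V // v ≠ 0}, ⟪D v.1, q⟫ / ‖v.1‖)
    (I : Submodule ℝ V)
    (u : V) (hu : u ∈ tildeXB a D I)
    (horth : ∀ z : V, (z ∈ tildeXBd a D I ∧ D z = 0) → a u z = 0) :
    ‖u‖ ≤ ((M + α) ^ 2 / (α ^ 2 * β)) * ‖D u‖ := by
  rcases eq_or_ne u 0 with hu0 | hu0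
  · have : (0:ℝ) ≤ ((M + α) ^ 2 / (α ^ 2 * β)) * ‖D u‖ := by positivity
    simpa [hu0] using this
  by_cases hV : ∀ v : V, v = 0
  · exact absurd (hV u) hu0
  push_neg at hV
  obtain ⟨v₀, hv₀⟩ := hV
  haveI : Nonempty {v : V // v ≠ 0} := ⟨⟨v₀, hv₀⟩⟩
  -- Step 1: construct a lifting w of D u with control on its norm
  have hexw : ∃ w : V, D w = D u ∧ β * ‖w‖ ≤ ‖D u‖ := by
    let D' : V →ₗ[ℝ] LinearMap.range D := D.rangeRestrict
    let A : (LinearMap.range D) →ₗ[ℝ] V := LinearMap.adjoint D'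
    have hDA : ∀ (v : V) (p : LinearMap.range D), ⟪D v, (p:Q)⟫ = ⟪v, A p⟫ := by
      intro v p
      rw [LinearMap.adjoint_inner_right D' v p, Submodule.coe_inner]
      rfl
    have hAlb : ∀ p : LinearMap.range D, β * ‖p‖ ≤ ‖A p‖ := by
      intro p
      have h1 : β * ‖(p:Q)‖ ≤ ⨆ v : {v : V // v ≠ 0}, ⟪D v.1, (p:Q)⟫ / ‖v.1‖ :=
        hinfsup (p:Q) p.2
      have h2 : (⨆ v : {v : V // v ≠ 0}, ⟪D v.1, (p:Q)⟫ / ‖v.1‖) ≤ ‖A p‖ := by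
        apply ciSup_le
        intro v
        rw [hDA v.1 p, div_le_iff₀ (norm_pos_iff.mpr v.2)]
        calc ⟪v.1, A p⟫ ≤ ‖v.1‖ * ‖A p‖ := real_inner_le_norm _ _
          _ = ‖A p‖ * ‖v.1‖ := mul_comm _ _
      exact h1.trans h2
    let G : (LinearMap.range D) →ₗ[ℝ] (LinearMap.range D) := D' ∘ₗ A
    have hGker : LinearMap.ker G = ⊥ := by
      rw [LinearMap.ker_eq_bot']
      intro p hp
      have h0 : ⟪A p, A p⟫ = (0:ℝ) := by
        rw [LinearMap.adjoint_inner_right D' (A p) p]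
        have hDAp : D' (A p) = 0 := hp
        rw [hDAp, inner_zero_left]
      have hA0 : A p = 0 := inner_self_eq_zero.mp h0
      have hb := hAlb p
      rw [hA0, norm_zero] at hb
      have hp0 : ‖p‖ = 0 := le_antisymm (by nlinarith) (norm_nonneg p)
      exact norm_eq_zero.mp hp0
    have hGsurj : Function.Surjective G :=
      LinearMap.injective_iff_surjective.mp (LinearMap.ker_eq_bot.mp hGker)
    obtain ⟨p, hp⟩ := hGsurj (D' u)
    refine ⟨A p, congrArg Subtype.val hp, ?_⟩
    have h1 : ‖A p‖ ^ 2 = ⟪D u, (p:Q)⟫ := by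
      rw [hDA u p]
      have h2 : ⟪A p, A p⟫ = ‖A p‖ ^ 2 := real_inner_self_eq_norm_sq (A p)
      rw [← h2]
      have hwAp : ⟪u, A p⟫ = ⟪D' u, p⟫ := LinearMap.adjoint_inner_right D' u p
      rw [hwAp, ← hp]
      exact LinearMap.adjoint_inner_right D' (A p) p
    rcases eq_or_ne (A p) 0 with h | h
    · rw [h, norm_zero, mul_zero]; exact norm_nonneg _
    · have hw0 : 0 < ‖A p‖ := norm_pos_iff.mpr h
      have h2 : ‖A p‖ ^ 2 ≤ ‖D u‖ * ‖p‖ := by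
        rw [h1]
        have h3 := real_inner_le_norm (D u) (p:Q)
        have hnp : ‖(p:Q)‖ = ‖p‖ := rfl
        rw [hnp] at h3
        exact h3
      have h3 : β * ‖p‖ ≤ ‖A p‖ := hAlb p
      nlinarith [norm_nonneg p, norm_nonneg (D u)]
  obtain ⟨w, hDw, hwb⟩ := hexw
  -- Step 2: a u (u - w) = 0
  have haue : a u (u - w) = 0 := by
    have hDe : D (u - w) = 0 := by rw [map_sub, hDw, sub_self]
    set N : Submodule ℝ V := I ⊓ LinearMap.ker D with hN
    let Φ : N →ₗ[ℝ] Module.Dual ℝ N :=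
      { toFun := fun n => ((a.flip n.1).comp N.subtype)
        map_add' := fun x y => by ext n'; simp
        map_smul' := fun c x => by ext n'; simp }
    have hΦinj : Function.Injective Φ := by
      rw [← LinearMap.ker_eq_bot, LinearMap.ker_eq_bot']
      intro n hn
      have h0 : a n.1 n.1 = 0 := LinearMap.congr_fun hn n
      have h1 := hcoer n.1
      rw [h0] at h1
      have hnz : n.1 = 0 := by
        by_contra hne
        have h2 : 0 < ‖n.1‖ := norm_pos_iff.mpr hne
        nlinarith [mul_pos h2 h2]
      exact Subtype.ext hnz
    have hΦsurj : Function.Surjective Φ :=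
      (LinearMap.injective_iff_surjective_of_finrank_eq_finrank
        Subspace.dual_finrank_eq.symm).mp hΦinj
    obtain ⟨n, hn⟩ := hΦsurj ((a.flip (u - w)).comp N.subtype)
    have hDn : D n.1 = 0 := n.2.2
    have hDz' : D (u - w - n.1) = 0 := by rw [map_sub, hDe, hDn, sub_self]
    have hz'mem : (u - w - n.1) ∈ tildeXBd a D I := by
      constructor
      · intro m hmI hmD
        have hmN : m ∈ N := ⟨hmI, LinearMap.mem_ker.mpr hmD⟩
        have h2 : a m n.1 = a m (u - w) := LinearMap.congr_fun hn ⟨m, hmN⟩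
        have h3 : a m (u - w - n.1) = a m (u - w) - a m n.1 := map_sub _ _ _
        rw [h3, h2, sub_self]
      · intro w' _
        rw [hDz', inner_zero_left]
    have hsplit : u - w = n.1 + (u - w - n.1) := by abel
    have h1 : a u n.1 = 0 := hu.1 n.1 n.2.1 hDn
    have h2 : a u (u - w - n.1) = 0 := horth _ ⟨hz'mem, hDz'⟩
    rw [hsplit, map_add, h1, h2, add_zero]
  -- Step 3: conclude by coercivity and boundedness
  have hsplit : a u u = a u w := by
    have huw : u = w + (u - w) := by abel
    calc a u u = a u (w + (u - w)) := by rw [← huw]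
      _ = a u w + a u (u - w) := map_add _ _ _
      _ = a u w := by rw [haue, add_zero]
  have h1 : α * ‖u‖ ^ 2 ≤ M * ‖u‖ * ‖w‖ := by
    calc α * ‖u‖ ^ 2 ≤ a u u := hcoer u
      _ = a u w := hsplit
      _ ≤ |a u w| := le_abs_self _
      _ ≤ M * ‖u‖ * ‖w‖ := hbdd u w
  have hupos : 0 < ‖u‖ := norm_pos_iff.mpr hu0
  have hαu : α * ‖u‖ ≤ M * ‖w‖ := by nlinarith
  have hkey : α * β * ‖u‖ ≤ M * ‖D u‖ := by
    nlinarith [mul_le_mul_of_nonneg_left hαu hβ.le, mul_le_mul_of_nonneg_left hwb hM.le]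
  rw [div_mul_eq_mul_div, le_div_iff₀ (by positivity)]
  nlinarith [mul_le_mul_of_nonneg_left hkey hα.le,
    mul_nonneg (mul_nonneg hM.le hM.le) (norm_nonneg (D u)),
    mul_nonneg (mul_nonneg hα.le hα.le) (norm_nonneg (D u)),
    mul_nonneg (mul_nonneg hM.le hα.le) (norm_nonneg (D u))]
end

section
/- Standard iterated penalty convergence, abstract form: Let V be finite dimensional, a bounded (M) and coercive (α) bilinear form, D : V → Q with inf-sup constant β > 0, λ > 0, and a_λ(u,v) := a(u,v) + λ⟨Du, Dv⟩. Let (u*, q*) ∈ V × D(V) solve a(u*, v) − ⟨q*, Dv⟩ = L(v) for all v and Du* = 0. Define w⁰ := 0 and iteratively uⁿ ∈ V by a_λ(uⁿ, v) = L(v) + ⟨Dwⁿ, Dv⟩ for all v ∈ V, wⁿ⁺¹ := wⁿ − λuⁿ. Then the errors eⁿ := u* − uⁿ satisfy (α + λ/Υ²)‖eⁿ⁺¹‖ ≤ M‖eⁿ‖ where Υ := (M+α)/(αβ); consequently ‖eⁿ‖ ≤ (MΥ²/λ)ⁿ ‖e⁰‖. -/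
open scoped RealInnerProductSpace

lemma key_bound {V Q : Type*}
    [NormedAddCommGroup V] [InnerProductSpace ℝ V] [FiniteDimensional ℝ V]
    [NormedAddCommGroup Q] [InnerProductSpace ℝ Q] [Nontrivial V]
    (a : V →ₗ[ℝ] V →ₗ[ℝ] ℝ) (M α β : ℝ)
    (hM : 0 < M) (hα : 0 < α) (hβ : 0 < β)
    (hbdd : ∀ u v : V, |a u v| ≤ M * ‖u‖ * ‖v‖)
    (hcoer : ∀ v : V, α * ‖v‖ ^ 2 ≤ a v v)
    (D : V →ₗ[ℝ] Q)
    (hinfsup : ∀ q ∈ LinearMap.range D,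
      β * ‖q‖ ≤ ⨆ v : {v : V // v ≠ 0}, ⟪D v.1, q⟫ / ‖v.1‖)
    (e : V) (he : ∀ k : V, D k = 0 → a e k = 0) :
    α * β * ‖e‖ ≤ M * ‖D e‖ := by
  obtain ⟨x, hx⟩ := exists_ne (0 : V)
  haveI : Nonempty {v : V // v ≠ 0} := ⟨⟨x, hx⟩⟩
  set R := LinearMap.range D with hR
  let D' : V →ₗ[ℝ] R := D.codRestrict _ (fun v => LinearMap.mem_range_self D v)
  let A := LinearMap.adjoint D'
  -- adjoint lower bound
  have hA : ∀ q : R, β * ‖q‖ ≤ ‖A q‖ := by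
    intro q
    have h1 := hinfsup (q : Q) q.2
    have h2 : (⨆ v : {v : V // v ≠ 0}, ⟪D v.1, (q : Q)⟫ / ‖v.1‖) ≤ ‖A q‖ := by
      apply ciSup_le (α := ℝ)
      intro v
      have hv : (0:ℝ) < ‖v.1‖ := norm_pos_iff.mpr v.2
      have h3 : ⟪D v.1, (q : Q)⟫ = ⟪v.1, A q⟫ := by
        rw [LinearMap.adjoint_inner_right]; rfl
      rw [h3, div_le_iff₀ hv]
      calc ⟪v.1, A q⟫ ≤ ‖v.1‖ * ‖A q‖ := real_inner_le_norm _ _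
        _ = ‖A q‖ * ‖v.1‖ := by ring
    calc β * ‖q‖ = β * ‖(q : Q)‖ := rfl
      _ ≤ _ := h1
      _ ≤ ‖A q‖ := h2
  -- T := D' ∘ A is bijective
  let T : R →ₗ[ℝ] R := D'.comp A
  have hT : ∀ q : R, (⟪T q, q⟫ : ℝ) = ‖A q‖ ^ 2 := by
    intro q
    calc (⟪T q, q⟫ : ℝ) = ⟪D' (A q), q⟫ := rfl
      _ = ⟪A q, A q⟫ := (LinearMap.adjoint_inner_right D' (A q) q).symm
      _ = ‖A q‖ ^ 2 := real_inner_self_eq_norm_sq _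
  have hTinj : Function.Injective T := by
    rw [← LinearMap.ker_eq_bot, LinearMap.ker_eq_bot']
    intro q hq
    have h0 : ‖A q‖ ^ 2 = 0 := by rw [← hT q, hq, inner_zero_left]
    have hA0 : ‖A q‖ = 0 := by
      have := sq_abs ‖A q‖
      nlinarith [norm_nonneg (A q)]
    have := hA q
    have hq0 : ‖q‖ = 0 := le_antisymm (by nlinarith) (norm_nonneg q)
    simpa using hq0
  have hTsurj : Function.Surjective T := (LinearMap.injective_iff_surjective).mp hTinj
  obtain ⟨p, hp⟩ := hTsurj (D' e)
  set z := A p with hz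
  have hDz : D z = D e := congrArg Subtype.val hp
  -- norm bounds
  have hip : (⟪D' e, p⟫ : ℝ) = ‖z‖ ^ 2 := by
    rw [← hp, hT]
  have hpe : (⟪D' e, p⟫ : ℝ) ≤ ‖D e‖ * ‖p‖ := by
    calc (⟪D' e, p⟫ : ℝ) ≤ ‖D' e‖ * ‖p‖ := real_inner_le_norm _ _
      _ = ‖D e‖ * ‖p‖ := rfl
  have hps : β ^ 2 * ‖p‖ ^ 2 ≤ ‖D e‖ * ‖p‖ := by
    have h1 := hA p
    have h2 : ‖A p‖ ^ 2 = ⟪D' e, p⟫ := by rw [← hT p, hp]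
    nlinarith [norm_nonneg p, norm_nonneg (A p),
      mul_le_mul h1 h1 (by positivity) (norm_nonneg (A p))]
  have hzB : β * ‖z‖ ≤ ‖D e‖ := by
    have hpB : β ^ 2 * ‖p‖ ≤ ‖D e‖ := by
      rcases eq_or_lt_of_le (norm_nonneg p) with h | h
      · rw [← h]; simpa using norm_nonneg (D e)
      · exact le_of_mul_le_mul_right (by nlinarith) h
    have h1 : (β * ‖z‖) ^ 2 ≤ ‖D e‖ ^ 2 := by
      have hzp : ‖z‖ ^ 2 ≤ ‖D e‖ * ‖p‖ := by rw [← hip]; exact hpe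
      nlinarith [mul_le_mul_of_nonneg_left hpB (norm_nonneg (D e)),
        mul_le_mul_of_nonneg_left hzp (sq_nonneg β)]
    have h2 : (0:ℝ) ≤ β * ‖z‖ := by positivity
    nlinarith [norm_nonneg (D e)]
  -- coercivity argument
  have hek : a e (e - z) = 0 := he _ (by rw [map_sub, hDz, sub_self])
  have h5 : α * ‖e‖ ^ 2 ≤ M * ‖e‖ * ‖z‖ := by
    calc α * ‖e‖ ^ 2 ≤ a e e := hcoer e
      _ = a e z := by
          have h6 : a e e - a e z = 0 := by rw [← map_sub]; exact hek
          linarith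
      _ ≤ |a e z| := le_abs_self _
      _ ≤ M * ‖e‖ * ‖z‖ := hbdd e z
  clear_value z
  clear hip hpe hps hek hDz hz hp hA hT hTinj hTsurj hinfsup hbdd hcoer he hx
  rcases eq_or_lt_of_le (norm_nonneg e) with h | h
  · have : α * β * ‖e‖ = 0 := by rw [← h]; ring
    rw [this]; positivity
  · have h8 : α * ‖e‖ ≤ M * ‖z‖ :=
      le_of_mul_le_mul_right (by nlinarith [h5]) h
    have h9 := mul_le_mul_of_nonneg_left h8 hβ.le
    have h10 := mul_le_mul_of_nonneg_left hzB hM.le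
    nlinarith [h9, h10]
open scoped RealInnerProductSpace


/-- geometric convergence of the standard iterated penalty method
(abstract form). -/
theorem iterated_penalty_convergence {V Q : Type*}
    [NormedAddCommGroup V] [InnerProductSpace ℝ V] [FiniteDimensional ℝ V]
    [NormedAddCommGroup Q] [InnerProductSpace ℝ Q]
    (a : V →ₗ[ℝ] V →ₗ[ℝ] ℝ) (M α β lam : ℝ)
    (hM : 0 < M) (hα : 0 < α) (hβ : 0 < β) (hlam : 0 < lam)
    (hbdd : ∀ u v : V, |a u v| ≤ M * ‖u‖ * ‖v‖)
    (hcoer : ∀ v : V, α * ‖v‖ ^ 2 ≤ a v v)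
    (D : V →ₗ[ℝ] Q)
    (hinfsup : ∀ q ∈ LinearMap.range D,
      β * ‖q‖ ≤ ⨆ v : {v : V // v ≠ 0}, ⟪D v.1, q⟫ / ‖v.1‖)
    (L : V →ₗ[ℝ] ℝ)
    (ustar : V) (qstar : Q) (hqstar : qstar ∈ LinearMap.range D)
    (hstar1 : ∀ v : V, a ustar v - ⟪qstar, D v⟫ = L v)
    (hstar2 : D ustar = 0)
    (u w : ℕ → V) (hw0 : w 0 = 0)
    (hiter : ∀ n : ℕ, ∀ v : V,
      a (u n) v + lam * ⟪D (u n), D v⟫ = L v + ⟪D (w n), D v⟫)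
    (hupdate : ∀ n : ℕ, w (n + 1) = w n - lam • u n) :
    (∀ n : ℕ, (α + lam / ((M + α) / (α * β)) ^ 2) * ‖ustar - u (n + 1)‖ ≤
        M * ‖ustar - u n‖) ∧
    (∀ n : ℕ, ‖ustar - u n‖ ≤
        (M * ((M + α) / (α * β)) ^ 2 / lam) ^ n * ‖ustar - u 0‖) := by
  rcases subsingleton_or_nontrivial V with hV | hV
  · have hz : ∀ n : ℕ, ustar - u n = (0 : V) := fun n => Subsingleton.elim _ _
    constructor
    · intro n; rw [hz n, hz (n + 1)]; simp
    · intro n; rw [hz n, hz 0]; simp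
  set Υ : ℝ := (M + α) / (α * β) with hΥ
  have hΥpos : 0 < Υ := div_pos (by linarith) (mul_pos hα hβ)
  have hΥ2 : 0 < Υ ^ 2 := by positivity
  have hDu : ∀ n, D (ustar - u n) = - D (u n) := by
    intro n; rw [map_sub, hstar2, zero_sub]
  -- identity (1)
  have hid : ∀ n v, a (ustar - u n) v + lam * ⟪D (ustar - u n), D v⟫
      = ⟪qstar - D (w n), D v⟫ := by
    intro n v
    have h1 := hstar1 v
    have h2 := hiter n v
    have h3 : a (ustar - u n) v = a ustar v - a (u n) v := by
      rw [map_sub, LinearMap.sub_apply]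
    have h4 : ⟪D (ustar - u n), D v⟫ = - ⟪D (u n), D v⟫ := by
      rw [hDu n, inner_neg_left]
    have h5 : ⟪qstar - D (w n), D v⟫ = ⟪qstar, D v⟫ - ⟪D (w n), D v⟫ :=
      inner_sub_left _ _ _
    rw [h3, h4, h5]; linarith
  -- orthogonality of errors to ker D
  have horth : ∀ n, ∀ k : V, D k = 0 → a (ustar - u n) k = 0 := by
    intro n k hk
    have h1 := hid n k
    rw [hk] at h1
    simpa using h1
  -- recurrence identity
  have hrec : ∀ n v, a (ustar - u (n + 1)) v
      + lam * ⟪D (ustar - u (n + 1)), D v⟫ = a (ustar - u n) v := by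
    intro n v
    have h1 := hid (n + 1) v
    have h2 := hid n v
    have h3 : qstar - D (w (n + 1)) = (qstar - D (w n)) + lam • D (u n) := by
      rw [hupdate n, map_sub, map_smul]; module
    have h4 : ⟪qstar - D (w (n + 1)), D v⟫
        = ⟪qstar - D (w n), D v⟫ + lam * ⟪D (u n), D v⟫ := by
      rw [h3, inner_add_left, real_inner_smul_left]
    have h5 : ⟪D (ustar - u n), D v⟫ = - ⟪D (u n), D v⟫ := by
      rw [hDu n, inner_neg_left]
    rw [h4] at h1
    have h6 : lam * ⟪D (ustar - u n), D v⟫ = -(lam * ⟪D (u n), D v⟫) := by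
      rw [h5]; ring
    linarith
  -- per-step estimate
  have hstep : ∀ n, (α + lam / Υ ^ 2) * ‖ustar - u (n + 1)‖ ≤ M * ‖ustar - u n‖ := by
    intro n
    have hb := key_bound a M α β hM hα hβ hbdd hcoer D hinfsup
      (ustar - u (n + 1)) (horth (n + 1))
    set x := ‖ustar - u (n + 1)‖ with hx
    set y := ‖D (ustar - u (n + 1))‖ with hy
    set s := ‖ustar - u n‖ with hs
    have hxy : x ^ 2 ≤ Υ ^ 2 * y ^ 2 := by
      have h1 : α * β * x ≤ (M + α) * y := by
        nlinarith [hb, norm_nonneg (D (ustar - u (n + 1))), hα.le]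
      have h2 : (α * β * x) ^ 2 ≤ ((M + α) * y) ^ 2 := by
        nlinarith [norm_nonneg (ustar - u (n + 1)), norm_nonneg (D (ustar - u (n + 1))),
          mul_pos hα hβ, mul_le_mul h1 h1 (by positivity) (by positivity)]
      have h3 : Υ ^ 2 = ((M + α) / (α * β)) ^ 2 := by rw [hΥ]
      rw [h3, div_pow, div_mul_eq_mul_div, le_div_iff₀ (by positivity)]
      nlinarith [h2]
    have hv := hrec n (ustar - u (n + 1))
    have hinner : ⟪D (ustar - u (n + 1)), D (ustar - u (n + 1))⟫ = y ^ 2 :=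
      real_inner_self_eq_norm_sq _
    have hcoe := hcoer (ustar - u (n + 1))
    have habs := hbdd (ustar - u n) (ustar - u (n + 1))
    have hle := le_abs_self (a (ustar - u n) (ustar - u (n + 1)))
    have hmain : α * x ^ 2 + lam * y ^ 2 ≤ M * s * x := by
      rw [hinner] at hv
      linarith
    rcases eq_or_lt_of_le (norm_nonneg (ustar - u (n + 1))) with h | h
    · have hx0 : x = 0 := h.symm
      rw [hx0, mul_zero]
      positivity
    · rw [← hx] at h
      have h1 : (α + lam / Υ ^ 2) * x ^ 2 ≤ M * s * x := by
        have h2 : lam / Υ ^ 2 * x ^ 2 ≤ lam * y ^ 2 := by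
          rw [div_mul_eq_mul_div, div_le_iff₀ hΥ2]
          nlinarith [hxy, hlam.le]
        linarith
      exact le_of_mul_le_mul_right (by nlinarith [h1]) h
  refine ⟨hstep, ?_⟩
  have hratio : ∀ n, ‖ustar - u (n + 1)‖ ≤ (M * Υ ^ 2 / lam) * ‖ustar - u n‖ := by
    intro n
    have h1 := hstep n
    have h2 : lam / Υ ^ 2 * ‖ustar - u (n + 1)‖ ≤ M * ‖ustar - u n‖ := by
      nlinarith [mul_nonneg hα.le (norm_nonneg (ustar - u (n + 1)))]
    have h3 : lam * ‖ustar - u (n + 1)‖ ≤ M * Υ ^ 2 * ‖ustar - u n‖ := by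
      calc lam * ‖ustar - u (n + 1)‖
          = (lam / Υ ^ 2 * ‖ustar - u (n + 1)‖) * Υ ^ 2 := by field_simp
        _ ≤ (M * ‖ustar - u n‖) * Υ ^ 2 := mul_le_mul_of_nonneg_right h2 hΥ2.le
        _ = M * Υ ^ 2 * ‖ustar - u n‖ := by ring
    rw [div_mul_eq_mul_div, le_div_iff₀ hlam]
    linarith
  intro n
  induction n with
  | zero => simp
  | succ n ih =>
    calc ‖ustar - u (n + 1)‖ ≤ (M * Υ ^ 2 / lam) * ‖ustar - u n‖ := hratio n
      _ ≤ (M * Υ ^ 2 / lam) * ((M * Υ ^ 2 / lam) ^ n * ‖ustar - u 0‖) :=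
          mul_le_mul_of_nonneg_left ih (by positivity)
      _ = (M * Υ ^ 2 / lam) ^ (n + 1) * ‖ustar - u 0‖ := by ring
end

section
/- Abstract iterated penalty pressure error bound: in the setting of the standard iterated penalty method, the pressure error rⁿ := q* − Dwⁿ satisfies β‖rⁿ‖ ≤ M‖eⁿ‖ + λ·C_D·‖Deⁿ‖, where eⁿ := u* − uⁿ, β is the inf-sup constant, M the boundedness constant of a, and C_D a bound on the norm of D (e.g. ‖Dv‖ ≤ C_D‖v‖ for all v). -/
open scoped RealInnerProductSpace

/-- pressure error bound for the standard iterated penalty method: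
`β‖rⁿ‖ ≤ M‖eⁿ‖ + λ C_D ‖Deⁿ‖`. -/
theorem iterated_penalty_pressure_bound {V Q : Type*}
    [NormedAddCommGroup V] [InnerProductSpace ℝ V] [FiniteDimensional ℝ V]
    [NormedAddCommGroup Q] [InnerProductSpace ℝ Q]
    (a : V →ₗ[ℝ] V →ₗ[ℝ] ℝ) (M α β lam CD : ℝ)
    (hM : 0 < M) (hα : 0 < α) (hβ : 0 < β) (hlam : 0 < lam) (hCD : 0 < CD)
    (hbdd : ∀ u v : V, |a u v| ≤ M * ‖u‖ * ‖v‖)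
    (hcoer : ∀ v : V, α * ‖v‖ ^ 2 ≤ a v v)
    (D : V →ₗ[ℝ] Q)
    (hDbdd : ∀ v : V, ‖D v‖ ≤ CD * ‖v‖)
    (hinfsup : ∀ q ∈ LinearMap.range D,
      β * ‖q‖ ≤ ⨆ v : {v : V // v ≠ 0}, ⟪D v.1, q⟫ / ‖v.1‖)
    (L : V →ₗ[ℝ] ℝ)
    (ustar : V) (qstar : Q) (hqstar : qstar ∈ LinearMap.range D)
    (hstar1 : ∀ v : V, a ustar v - ⟪qstar, D v⟫ = L v)
    (hstar2 : D ustar = 0)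
    (u w : ℕ → V) (hw0 : w 0 = 0)
    (hiter : ∀ n : ℕ, ∀ v : V,
      a (u n) v + lam * ⟪D (u n), D v⟫ = L v + ⟪D (w n), D v⟫)
    (hupdate : ∀ n : ℕ, w (n + 1) = w n - lam • u n) :
    ∀ n : ℕ, β * ‖qstar - D (w n)‖ ≤
      M * ‖ustar - u n‖ + lam * CD * ‖D (ustar - u n)‖ := by
  intro n
  set e : V := ustar - u n with he
  set r : Q := qstar - D (w n) with hr
  -- error equation
  have key : ∀ v : V, ⟪D v, r⟫ = a e v + lam * ⟪D e, D v⟫ := by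
    intro v
    have h1 := hstar1 v
    have h2 := hiter n v
    have hDe : D e = -(D (u n)) := by
      rw [he, map_sub, hstar2]; abel
    have hae : a e v = a ustar v - a (u n) v := by
      rw [he, map_sub]; simp
    have hir : ⟪D v, r⟫ = ⟪qstar, D v⟫ - ⟪D (w n), D v⟫ := by
      rw [hr, inner_sub_right, real_inner_comm (D v) qstar, real_inner_comm (D v) (D (w n))]
    rw [hir, hae, hDe, inner_neg_left]
    linarith
  -- bound the sup
  obtain ⟨p, hp⟩ := hqstar
  have hrmem : r ∈ LinearMap.range D := ⟨p - w n, by rw [map_sub, hp]⟩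
  have h1 := hinfsup r hrmem
  refine h1.trans (Real.iSup_le ?_ ?_)
  · rintro ⟨v, hv⟩
    have hv0 : (0:ℝ) < ‖v‖ := norm_pos_iff.mpr hv
    rw [div_le_iff₀ hv0]
    have hb1 : a e v ≤ M * ‖e‖ * ‖v‖ := (abs_le.mp (hbdd e v)).2
    have hb2 : ⟪D e, D v⟫ ≤ ‖D e‖ * ‖D v‖ := real_inner_le_norm _ _
    have hb3 : ‖D v‖ ≤ CD * ‖v‖ := hDbdd v
    have hb4 : ‖D e‖ * ‖D v‖ ≤ ‖D e‖ * (CD * ‖v‖) :=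
      mul_le_mul_of_nonneg_left hb3 (norm_nonneg _)
    have := key v
    nlinarith [norm_nonneg (D e), norm_nonneg v]
  · positivity
end

section
/- If u ∈ V satisfies a(u, w) = 0 for all w ∈ ker D ⊆ V, where a is bounded with constant M and coercive with constant α, and D has inf-sup constant β over V × D(V), then ‖u‖ ≤ ((M+α)/(αβ)) ‖Du‖. -/
open scoped RealInnerProductSpace

/-- a function `a`-orthogonal to `ker D` satisfies
`‖u‖ ≤ ((M+α)/(αβ)) ‖Du‖`. -/
theorem orthog_divfree_bound {V Q : Type*}
    [NormedAddCommGroup V] [InnerProductSpace ℝ V] [FiniteDimensional ℝ V]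
    [NormedAddCommGroup Q] [InnerProductSpace ℝ Q]
    (a : V →ₗ[ℝ] V →ₗ[ℝ] ℝ) (M α β : ℝ) (hM : 0 < M) (hα : 0 < α) (hβ : 0 < β)
    (hbdd : ∀ u v : V, |a u v| ≤ M * ‖u‖ * ‖v‖)
    (hcoer : ∀ v : V, α * ‖v‖ ^ 2 ≤ a v v)
    (D : V →ₗ[ℝ] Q)
    (hinfsup : ∀ q ∈ LinearMap.range D,
      β * ‖q‖ ≤ ⨆ v : {v : V // v ≠ 0}, ⟪D v.1, q⟫ / ‖v.1‖)
    (u : V) (hu : ∀ w ∈ LinearMap.ker D, a u w = 0) :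
    ‖u‖ ≤ ((M + α) / (α * β)) * ‖D u‖ := by
  by_cases hu0 : u = 0
  · simp only [hu0, norm_zero, map_zero]
    simp
  set K := LinearMap.ker D with hK
  haveI : CompleteSpace K := FiniteDimensional.complete ℝ K
  set w : V := u - (K.orthogonalProjectionOnto u : V) with hw
  have hwmem : w ∈ Kᗮ := Submodule.sub_starProjection_mem_orthogonal (K := K) u
  have huw : u - w ∈ K := by
    simp only [hw, sub_sub_cancel]
    exact (K.orthogonalProjectionOnto u).2
  have hDw : D w = D u := by
    have h0 : D (u - w) = 0 := huw
    rw [map_sub, sub_eq_zero] at h0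
    exact h0.symm
  -- Step 1: α ‖u‖ ≤ M ‖w‖
  have h1 : α * ‖u‖ ≤ M * ‖w‖ := by
    have hz : a u (u - w) = 0 := hu _ huw
    have : a u u = a u w := by
      have := map_sub (a u) u w
      rw [hz] at this
      linarith
    have h2 : α * ‖u‖ ^ 2 ≤ M * ‖u‖ * ‖w‖ := by
      calc α * ‖u‖ ^ 2 ≤ a u u := hcoer u
        _ = a u w := this
        _ ≤ M * ‖u‖ * ‖w‖ := le_of_abs_le (hbdd u w)
    have hun : 0 < ‖u‖ := norm_pos_iff.mpr hu0
    nlinarith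
  -- Step 2: β ‖w‖ ≤ ‖D w‖
  set R := LinearMap.range D with hR
  haveI : FiniteDimensional ℝ R := inferInstance
  set E : V →ₗ[ℝ] R := D.codRestrict R (fun v => LinearMap.mem_range_self D v) with hE
  set A : R →ₗ[ℝ] V := LinearMap.adjoint E with hA
  set S : Submodule ℝ V := LinearMap.range A with hS
  have hEc : ∀ x : V, ((E x : Q)) = D x := fun x => rfl
  have hSorth : Sᗮ = K := by
    ext v
    simp only [Submodule.mem_orthogonal, hS, hK, LinearMap.mem_ker]
    constructor
    · intro h
      have hEv : E v = 0 := by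
        have := h (A (E v)) ⟨E v, rfl⟩
        rw [LinearMap.adjoint_inner_left] at this
        exact inner_self_eq_zero.mp this
      have : (E v : Q) = 0 := by rw [hEv]; rfl
      simpa [hE, LinearMap.codRestrict] using this
    · intro h x hx
      obtain ⟨p, rfl⟩ := hx
      rw [LinearMap.adjoint_inner_left]
      have hEv : E v = 0 := by
        apply Subtype.ext
        simpa [hE, LinearMap.codRestrict] using h
      rw [hEv, inner_zero_right]
  have hwS : w ∈ S := by
    have : Kᗮ = Sᗮᗮ := by rw [hSorth]
    rw [this, Submodule.orthogonal_orthogonal] at hwmem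
    exact hwmem
  obtain ⟨p, hp⟩ := hwS
  -- bound β ‖p‖ ≤ ‖w‖ using the inf-sup condition
  have hp1 : β * ‖(p : Q)‖ ≤ ‖w‖ := by
    have hmem : (p : Q) ∈ LinearMap.range D := p.2
    refine le_trans (hinfsup (p : Q) hmem) ?_
    haveI : Nonempty {v : V // v ≠ 0} := ⟨⟨u, hu0⟩⟩
    apply ciSup_le
    intro v
    have hv : (0 : ℝ) < ‖v.1‖ := norm_pos_iff.mpr v.2
    rw [div_le_iff₀ hv]
    have hinner : ⟪D v.1, (p : Q)⟫ = ⟪v.1, w⟫ := by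
      have h1 : ⟪D v.1, (p : Q)⟫ = ⟪E v.1, p⟫ := by
        rw [Submodule.coe_inner, hEc]
      have h2 : ⟪E v.1, p⟫ = ⟪v.1, A p⟫ := (LinearMap.adjoint_inner_right E v.1 p).symm
      rw [h1, h2, hp]
    rw [hinner]
    calc ⟪v.1, w⟫ ≤ ‖v.1‖ * ‖w‖ := real_inner_le_norm v.1 w
      _ = ‖w‖ * ‖v.1‖ := mul_comm _ _
  have h2 : β * ‖w‖ ≤ ‖D u‖ := by
    by_cases hw0 : w = 0
    · simp only [hw0, norm_zero, mul_zero]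
      exact norm_nonneg _
    have hwn : (0 : ℝ) < ‖w‖ := norm_pos_iff.mpr hw0
    have key : β * ‖w‖ ^ 2 ≤ ‖w‖ * ‖D u‖ := by
      have e1 : ‖w‖ ^ 2 = ⟪w, w⟫ := (real_inner_self_eq_norm_sq w).symm
      have e2 : ⟪w, w⟫ = ⟪(p : Q), D w⟫ := by
        conv_lhs => rw [← hp]
        rw [LinearMap.adjoint_inner_left, Submodule.coe_inner, hp, hEc]
      have e3 : ⟪(p : Q), D w⟫ ≤ ‖(p : Q)‖ * ‖D w‖ := real_inner_le_norm _ _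
      calc β * ‖w‖ ^ 2 = β * ⟪w, w⟫ := by rw [e1]
        _ = β * ⟪(p : Q), D w⟫ := by rw [e2]
        _ ≤ β * (‖(p : Q)‖ * ‖D w‖) := mul_le_mul_of_nonneg_left e3 hβ.le
        _ = β * ‖(p : Q)‖ * ‖D u‖ := by rw [hDw, mul_assoc]
        _ ≤ ‖w‖ * ‖D u‖ := mul_le_mul_of_nonneg_right hp1 (norm_nonneg _)
    rw [← mul_le_mul_iff_of_pos_right hwn]
    calc β * ‖w‖ * ‖w‖ = β * ‖w‖ ^ 2 := by ring
      _ ≤ ‖w‖ * ‖D u‖ := key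
      _ = ‖D u‖ * ‖w‖ := mul_comm _ _
  -- combine
  have hDun : (0 : ℝ) ≤ ‖D u‖ := norm_nonneg _
  have hwn : (0 : ℝ) ≤ ‖w‖ := norm_nonneg _
  rw [div_mul_eq_mul_div, le_div_iff₀ (by positivity)]
  have k1 := mul_le_mul_of_nonneg_left h2 hM.le
  have k2 := mul_le_mul_of_nonneg_left h1 hβ.le
  have k3 : 0 ≤ α * ‖D u‖ := mul_nonneg hα.le hDun
  linarith
end

section
/- Decomposition of the mixed solution (abstract version of Lemma 4.6): let (u_X, q_X) ∈ V × D(V) solve the mixed problem a(u_X, v) − ⟨q_X, Dv⟩ = L(v) for all v ∈ V and ⟨r, D u_X⟩ = 0 for all r ∈ D(V). Then u_X = ũ + u_I and q_X = q̃ + q_I, where (ũ, q̃) ∈ X̃_B × D(X̃_B) solves the boundary Stokes problem a(ũ, v) − ⟨q̃, Dv⟩ = L(v) for all v ∈ X̃_B†, ⟨r, Dũ⟩ = 0 for all r ∈ D(X̃_B†), and (u_I, q_I) ∈ I × D(I) solves the interior Stokes problem a(u_I, v) − ⟨q_I, Dv⟩ = L(v) − a(ũ, v) for all v ∈ I, ⟨r,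 D u_I⟩ = 0 for all r ∈ D(I). Moreover both subproblems are uniquely solvable. -/
open scoped RealInnerProductSpace

section Aux

variable {V Q : Type*}
    [NormedAddCommGroup V] [InnerProductSpace ℝ V] [FiniteDimensional ℝ V]
    [NormedAddCommGroup Q] [InnerProductSpace ℝ Q]

/-- Riesz representation on a finite-dimensional real inner product space,
by a dimension count. -/
lemma riesz_fd {E : Type*} [NormedAddCommGroup E] [InnerProductSpace ℝ E]
    [FiniteDimensional ℝ E] (φ : E →ₗ[ℝ] ℝ) : ∃ p : E, ∀ y : E, ⟪p, y⟫ = φ y := by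
  have hinj : Function.Injective (innerₗ E) := by
    rw [← LinearMap.ker_eq_bot, LinearMap.ker_eq_bot']
    intro m hm
    have : ⟪m, m⟫ = 0 := by
      have := congrArg (fun f : E →ₗ[ℝ] ℝ => f m) hm
      simpa using this
    exact inner_self_eq_zero.mp this
  have hsurj : Function.Surjective (innerₗ E) :=
    (LinearMap.injective_iff_surjective_of_finrank_eq_finrank
      (Subspace.dual_finrank_eq (V := E)).symm).mp hinj
  obtain ⟨p, hp⟩ := hsurj φ
  exact ⟨p, fun y => by rw [← hp]; simp⟩

/-- Existence of the decomposition `v = i + x` with `i ∈ I` and `x` in the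
(generalized) boundary space for the bilinear form `b`. -/
lemma decomp_exists (b : V →ₗ[ℝ] V →ₗ[ℝ] ℝ) (hb : ∀ v : V, b v v = 0 → v = 0)
    (D : V →ₗ[ℝ] Q) (I : Submodule ℝ V) (v : V) :
    ∃ i ∈ I, (∀ z ∈ I, D z = 0 → b (v - i) z = 0) ∧ (∀ w ∈ I, ⟪D (v - i), D w⟫ = 0) := by
  classical
  set N : Submodule ℝ V := I ⊓ LinearMap.ker D with hNdef
  set J : Submodule ℝ Q := I.map D with hJdef
  haveI : FiniteDimensional ℝ J := Module.Finite.map I D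
  haveI : CompleteSpace J := FiniteDimensional.complete ℝ J
  -- the linear map encoding the two conditions
  set T1 : ↥I →ₗ[ℝ] Module.Dual ℝ ↥N :=
    (LinearMap.lcomp ℝ ℝ N.subtype).comp (b.comp I.subtype) with hT1def
  set T2 : ↥I →ₗ[ℝ] ↥J :=
    (D.domRestrict I).codRestrict J (fun i => Submodule.mem_map_of_mem i.2) with hT2def
  set T : ↥I →ₗ[ℝ] Module.Dual ℝ ↥N × ↥J := T1.prod T2 with hTdef
  have hT2coe : ∀ i : ↥I, ((T2 i : Q)) = D (i : V) := fun i => rfl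
  have hT1app : ∀ (i : ↥I) (z : ↥N), T1 i z = b (i : V) (z : V) := fun i z => rfl
  have hinj : Function.Injective T := by
    rw [← LinearMap.ker_eq_bot, LinearMap.ker_eq_bot']
    intro m hm
    have h1 : T1 m = 0 := congrArg Prod.fst hm
    have h2 : T2 m = 0 := congrArg Prod.snd hm
    have hDm : D (m : V) = 0 := by
      have := congrArg (Subtype.val) h2
      simpa [hT2coe] using this
    have hmN : (m : V) ∈ N := ⟨m.2, hDm⟩
    have hbm : b (m : V) (m : V) = 0 := by
      have := congrArg (fun f : Module.Dual ℝ ↥N => f ⟨(m : V), hmN⟩) h1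
      simpa [hT1app] using this
    have : (m : V) = 0 := hb _ hbm
    exact Subtype.ext this
  -- dimension count
  have hdim : Module.finrank ℝ ↥I = Module.finrank ℝ (Module.Dual ℝ ↥N × ↥J) := by
    have hrn := LinearMap.finrank_range_add_finrank_ker (D.domRestrict I)
    have hker : LinearMap.ker (D.domRestrict I) = (LinearMap.ker D).comap I.subtype :=
      LinearMap.ker_domRestrict I D
    have hkerdim : Module.finrank ℝ ↥(LinearMap.ker (D.domRestrict I))
        = Module.finrank ℝ ↥N := by
      rw [hker]
      have := Submodule.finrank_map_subtype_eq I ((LinearMap.ker D).comap I.subtype)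
      rw [← this, Submodule.map_comap_subtype]
    have hrange : LinearMap.range (D.domRestrict I) = J := by
      ext q
      simp [hJdef, LinearMap.mem_range, Submodule.mem_map]
    rw [Module.finrank_prod, Subspace.dual_finrank_eq]
    rw [hrange, hkerdim] at hrn
    omega
  have hsurj : Function.Surjective T :=
    (LinearMap.injective_iff_surjective_of_finrank_eq_finrank hdim).mp hinj
  obtain ⟨i, hi⟩ := hsurj ((b v).comp N.subtype,
    J.orthogonalProjectionOnto (D v))
  have h1 : T1 i = (b v).comp N.subtype := congrArg Prod.fst hi
  have h2 : T2 i = J.orthogonalProjectionOnto (D v) := congrArg Prod.snd hi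
  have hDi : D (i : V) = (J.orthogonalProjectionOnto (D v) : Q) := by
    have := congrArg (Subtype.val) h2
    simpa [hT2coe] using this
  refine ⟨(i : V), i.2, ?_, ?_⟩
  · intro z hz hDz
    have hzN : z ∈ N := ⟨hz, hDz⟩
    have := congrArg (fun f : Module.Dual ℝ ↥N => f ⟨z, hzN⟩) h1
    have hiz : b (i : V) z = b v z := by simpa [hT1app] using this
    have : b (v - (i : V)) z = b v z - b (i : V) z := by
      simp [map_sub]
    rw [this, hiz, sub_self]
  · intro w hw
    have : D (v - (i : V)) = D v - (J.orthogonalProjectionOnto (D v) : Q) := by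
      rw [map_sub, hDi]
    rw [this]
    exact J.starProjection_inner_eq_zero (D v) (D w) (Submodule.mem_map_of_mem hw)

/-- Unique solvability of the coercive problem on `N = I ∩ ker D`. -/
lemma solveN (b : V →ₗ[ℝ] V →ₗ[ℝ] ℝ) (hb : ∀ v : V, b v v = 0 → v = 0)
    (D : V →ₗ[ℝ] Q) (I : Submodule ℝ V) (F : V →ₗ[ℝ] ℝ) :
    ∃ u : V, u ∈ I ∧ D u = 0 ∧ (∀ z ∈ I, D z = 0 → b u z = F z) := by
  classical
  set N : Submodule ℝ V := I ⊓ LinearMap.ker D with hNdef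
  set S : ↥N →ₗ[ℝ] Module.Dual ℝ ↥N :=
    (LinearMap.lcomp ℝ ℝ N.subtype).comp (b.comp N.subtype) with hSdef
  have hSapp : ∀ (u z : ↥N), S u z = b (u : V) (z : V) := fun u z => rfl
  have hinj : Function.Injective S := by
    rw [← LinearMap.ker_eq_bot, LinearMap.ker_eq_bot']
    intro m hm
    have : b (m : V) (m : V) = 0 := by
      have := congrArg (fun f : Module.Dual ℝ ↥N => f m) hm
      simpa [hSapp] using this
    exact Subtype.ext (hb _ this)
  have hsurj : Function.Surjective S :=
    (LinearMap.injective_iff_surjective_of_finrank_eq_finrank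
      (Subspace.dual_finrank_eq (V := ↥N)).symm).mp hinj
  obtain ⟨u, hu⟩ := hsurj (F.comp N.subtype)
  refine ⟨(u : V), u.2.1, u.2.2, ?_⟩
  intro z hz hDz
  have := congrArg (fun f : Module.Dual ℝ ↥N => f ⟨z, hz, hDz⟩) hu
  simpa [hSapp] using this

/-- Existence of the pressure: any functional vanishing on `N` is represented by
an element of `D(I)`. -/
lemma solveQ (D : V →ₗ[ℝ] Q) (I : Submodule ℝ V) (G : V →ₗ[ℝ] ℝ)
    (hG : ∀ z ∈ I, D z = 0 → G z = 0) :
    ∃ q ∈ D '' (I : Set V), ∀ v ∈ I, ⟪q, D v⟫ = G v := by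
  classical
  set J : Submodule ℝ Q := I.map D with hJdef
  haveI : FiniteDimensional ℝ J := Module.Finite.map I D
  set Dr : ↥I →ₗ[ℝ] ↥J :=
    (D.domRestrict I).codRestrict J (fun i => Submodule.mem_map_of_mem i.2) with hDrdef
  have hDrcoe : ∀ i : ↥I, ((Dr i : Q)) = D (i : V) := fun i => rfl
  have hDrsurj : LinearMap.range Dr = ⊤ := by
    rw [LinearMap.range_eq_top]
    rintro ⟨q, hq⟩
    obtain ⟨x, hx, rfl⟩ := hq
    exact ⟨⟨x, hx⟩, rfl⟩
  obtain ⟨s, hs⟩ := Dr.exists_rightInverse_of_surjective hDrsurj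
  set φ : ↥J →ₗ[ℝ] ℝ := (G.comp I.subtype).comp s with hφdef
  obtain ⟨p, hp⟩ := riesz_fd φ
  refine ⟨(p : Q), ?_, ?_⟩
  · obtain ⟨x, hx, hxe⟩ := p.2
    exact ⟨x, hx, hxe⟩
  · intro v hv
    set v' : ↥I := ⟨v, hv⟩ with hv'def
    have h1 : ⟪(p : Q), D v⟫ = ⟪p, Dr v'⟫ := by
      rw [Submodule.coe_inner, hDrcoe]
    have h2 : ⟪p, Dr v'⟫ = G ((s (Dr v') : ↥I) : V) := by
      rw [hp]; rfl
    have h3 : G ((s (Dr v') : ↥I) : V) = G v := by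
      have hker : Dr (v' - s (Dr v')) = 0 := by
        have := congrArg (fun f : ↥J →ₗ[ℝ] ↥J => f (Dr v')) hs
        simp only [LinearMap.comp_apply, LinearMap.id_apply] at this
        rw [map_sub, this, sub_self]
      have hDzero : D ((v' - s (Dr v') : ↥I) : V) = 0 := by
        have := congrArg (Subtype.val) hker
        simpa [hDrcoe] using this
      have hGzero : G ((v' - s (Dr v') : ↥I) : V) = 0 :=
        hG _ (v' - s (Dr v')).2 hDzero
      have hco : ((v' - s (Dr v') : ↥I) : V) = v - ((s (Dr v') : ↥I) : V) := by
        simp [hv'def]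
      rw [hco, map_sub] at hGzero
      linarith
    rw [h1, h2, h3]

/-- Closure of `tildeXB` under subtraction. -/
lemma tildeXB_sub (a : V →ₗ[ℝ] V →ₗ[ℝ] ℝ) (D : V →ₗ[ℝ] Q) (I : Submodule ℝ V)
    {x y : V} (hx : x ∈ tildeXB a D I) (hy : y ∈ tildeXB a D I) :
    x - y ∈ tildeXB a D I := by
  constructor
  · intro z hz hDz
    have h1 := hx.1 z hz hDz
    have h2 := hy.1 z hz hDz
    have : a (x - y) z = a x z - a y z := by simp [map_sub]
    rw [this, h1, h2, sub_self]
  · intro w hw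
    have h1 := hx.2 w hw
    have h2 := hy.2 w hw
    rw [map_sub, inner_sub_left, h1, h2, sub_self]

/-- Uniqueness (homogeneous case) for the boundary problem. -/
lemma bnd_homog (a : V →ₗ[ℝ] V →ₗ[ℝ] ℝ) (hb : ∀ v : V, a v v = 0 → v = 0)
    (D : V →ₗ[ℝ] Q) (I : Submodule ℝ V) (u : V) (q : Q)
    (hu : u ∈ tildeXB a D I) (hq : q ∈ D '' tildeXB a D I)
    (h1 : ∀ v ∈ tildeXBd a D I, a u v - ⟪q, D v⟫ = 0)
    (h2 : ∀ r ∈ D '' tildeXBd a D I, ⟪r, D u⟫ = 0) : u = 0 ∧ q = 0 := by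
  have hbflip : ∀ v : V, a.flip v v = 0 → v = 0 := by
    intro v hv; exact hb v (by simpa using hv)
  have hdecd : ∀ w : V, ∃ i ∈ I, (w - i) ∈ tildeXBd a D I := by
    intro w
    obtain ⟨i, hiI, hc1, hc2⟩ := decomp_exists a.flip hbflip D I w
    exact ⟨i, hiI, ⟨fun z hz hDz => by simpa using hc1 z hz hDz, hc2⟩⟩
  obtain ⟨i, hiI, hxd⟩ := hdecd u
  -- Step (a): D u = 0
  have hDu : D u = 0 := by
    have hsum : D i + D (u - i) = D u := by rw [← map_add]; congr 1; abel
    have e1 : ⟪D u, D i⟫ = 0 := hu.2 i hiI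
    have e2 : ⟪D u, D (u - i)⟫ = 0 := by
      rw [real_inner_comm]
      exact h2 (D (u - i)) ⟨u - i, hxd, rfl⟩
    have : ⟪D u, D u⟫ = ⟪D u, D i⟫ + ⟪D u, D (u - i)⟫ := by
      rw [← inner_add_right, hsum]
    rw [e1, e2, add_zero] at this
    exact inner_self_eq_zero.mp this
  -- Step (b): D i = 0 and D (u - i) = 0
  have hDi : D i = 0 := by
    have hDui : D (u - i) = -D i := by rw [map_sub, hDu, zero_sub]
    have e := hxd.2 i hiI
    rw [hDui, inner_neg_left] at e
    have : ⟪D i, D i⟫ = 0 := by linarith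
    exact inner_self_eq_zero.mp this
  have hDui : D (u - i) = 0 := by rw [map_sub, hDu, hDi, sub_zero]
  -- Step (c): u = 0
  have hu0 : u = 0 := by
    apply hb
    have hsplit : a u u = a u i + a u (u - i) := by
      rw [← map_add]; congr 1; abel
    have e1 : a u i = 0 := hu.1 i hiI hDi
    have e2 : a u (u - i) = 0 := by
      have := h1 (u - i) hxd
      rw [hDui, inner_zero_right, sub_zero] at this
      exact this
    rw [hsplit, e1, e2, add_zero]
  -- Step (d): q = 0
  obtain ⟨x, hx, rfl⟩ := hq
  obtain ⟨i', hi'I, hyd⟩ := hdecd x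
  have hDi' : D i' = 0 := by
    have hDsplit : D (x - i') = D x - D i' := map_sub D x i'
    have e1 : ⟪D x, D i'⟫ = 0 := hx.2 i' hi'I
    have e2 : ⟪D (x - i'), D i'⟫ = 0 := hyd.2 i' hi'I
    have : ⟪D i', D i'⟫ = 0 := by
      have : ⟪D x - D i', D i'⟫ = 0 := by rw [← hDsplit]; exact e2
      rw [inner_sub_left, e1] at this
      linarith
    exact inner_self_eq_zero.mp this
  have hDxd : D (x - i') = D x := by rw [map_sub, hDi', sub_zero]
  have := h1 (x - i') hyd
  rw [hu0, hDxd] at this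
  have : ⟪D x, D x⟫ = 0 := by
    have h0 : a 0 (x - i') = 0 := by simp
    rw [h0] at this
    linarith
  exact ⟨hu0, inner_self_eq_zero.mp this⟩

/-- Uniqueness (homogeneous case) for the interior problem. -/
lemma int_homog (a : V →ₗ[ℝ] V →ₗ[ℝ] ℝ) (hb : ∀ v : V, a v v = 0 → v = 0)
    (D : V →ₗ[ℝ] Q) (I : Submodule ℝ V) (u : V) (q : Q)
    (hu : u ∈ I) (hq : q ∈ D '' (I : Set V))
    (h1 : ∀ v ∈ I, a u v - ⟪q, D v⟫ = 0)
    (h2 : ∀ r ∈ D '' (I : Set V), ⟪r, D u⟫ = 0) : u = 0 ∧ q = 0 := by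
  have hDu : D u = 0 := by
    have := h2 (D u) ⟨u, hu, rfl⟩
    exact inner_self_eq_zero.mp this
  have hu0 : u = 0 := by
    apply hb
    have := h1 u hu
    rw [hDu, inner_zero_right, sub_zero] at this
    exact this
  obtain ⟨w, hw, rfl⟩ := hq
  have := h1 w hw
  rw [hu0] at this
  have : ⟪D w, D w⟫ = 0 := by
    have h0 : a 0 w = 0 := by simp
    rw [h0] at this
    linarith
  exact ⟨hu0, inner_self_eq_zero.mp this⟩

end Aux

/-- decomposition of the mixed solution into the boundary solution
and the interior solution; both subproblems are uniquely solvable. -/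
theorem mixed_solution_decomposition {V Q : Type*}
    [NormedAddCommGroup V] [InnerProductSpace ℝ V] [FiniteDimensional ℝ V]
    [NormedAddCommGroup Q] [InnerProductSpace ℝ Q]
    (a : V →ₗ[ℝ] V →ₗ[ℝ] ℝ) (M α : ℝ) (hM : 0 < M) (hα : 0 < α)
    (hbdd : ∀ u v : V, |a u v| ≤ M * ‖u‖ * ‖v‖)
    (hcoer : ∀ v : V, α * ‖v‖ ^ 2 ≤ a v v)
    (D : V →ₗ[ℝ] Q) (I : Submodule ℝ V)
    (L : V →ₗ[ℝ] ℝ)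
    (uX : V) (qX : Q) (hqX : qX ∈ LinearMap.range D)
    (hX1 : ∀ v : V, a uX v - ⟪qX, D v⟫ = L v)
    (hX2 : ∀ r ∈ LinearMap.range D, ⟪r, D uX⟫ = 0) :
    (∃! p : V × Q,
        p.1 ∈ tildeXB a D I ∧ p.2 ∈ D '' tildeXB a D I ∧
        (∀ v ∈ tildeXBd a D I, a p.1 v - ⟪p.2, D v⟫ = L v) ∧
        (∀ r ∈ D '' tildeXBd a D I, ⟪r, D p.1⟫ = 0)) ∧
    (∀ ut : V,
      ∃! p : V × Q,
        p.1 ∈ I ∧ p.2 ∈ D '' (I : Set V) ∧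
        (∀ v ∈ I, a p.1 v - ⟪p.2, D v⟫ = L v - a ut v) ∧
        (∀ r ∈ D '' (I : Set V), ⟪r, D p.1⟫ = 0)) ∧
    (∀ ut uI : V, ∀ qt qI : Q,
      (ut ∈ tildeXB a D I ∧ qt ∈ D '' tildeXB a D I ∧
        (∀ v ∈ tildeXBd a D I, a ut v - ⟪qt, D v⟫ = L v) ∧
        (∀ r ∈ D '' tildeXBd a D I, ⟪r, D ut⟫ = 0)) →
      (uI ∈ I ∧ qI ∈ D '' (I : Set V) ∧
        (∀ v ∈ I, a uI v - ⟪qI, D v⟫ = L v - a ut v) ∧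
        (∀ r ∈ D '' (I : Set V), ⟪r, D uI⟫ = 0)) →
      uX = ut + uI ∧ qX = qt + qI) := by
  have ha0 : ∀ v : V, a v v = 0 → v = 0 := by
    intro v hv
    have h1 := hcoer v
    rw [hv] at h1
    have h2 : ‖v‖ ^ 2 ≤ 0 := by nlinarith
    have h3 : ‖v‖ = 0 := by nlinarith [sq_nonneg ‖v‖, norm_nonneg v]
    exact norm_eq_zero.mp h3
  have hDuX : D uX = 0 := inner_self_eq_zero.mp (hX2 (D uX) ⟨uX, rfl⟩)
  -- decompose uX
  obtain ⟨i₀, hi₀I, hb1, hb2⟩ := decomp_exists a ha0 D I uX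
  set ut : V := uX - i₀ with hutdef
  have hutXB : ut ∈ tildeXB a D I := ⟨hb1, hb2⟩
  have hDi₀ : D i₀ = 0 := by
    have hDut : D ut = -D i₀ := by rw [hutdef, map_sub, hDuX, zero_sub]
    have e := hutXB.2 i₀ hi₀I
    rw [hDut, inner_neg_left] at e
    have : ⟪D i₀, D i₀⟫ = 0 := by linarith
    exact inner_self_eq_zero.mp this
  have hDut : D ut = 0 := by rw [hutdef, map_sub, hDuX, hDi₀, sub_zero]
  -- decompose qX
  obtain ⟨w₀, hw₀⟩ := hqX
  obtain ⟨iw, hiwI, hc1, hc2⟩ := decomp_exists a ha0 D I w₀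
  set xw : V := w₀ - iw with hxwdef
  have hxwXB : xw ∈ tildeXB a D I := ⟨hc1, hc2⟩
  set qt : Q := D xw with hqtdef
  set qI : Q := D iw with hqIdef
  have hqsum : qX = qI + qt := by
    rw [hqIdef, hqtdef, ← map_add, ← hw₀]
    congr 1
    rw [hxwdef]; abel
  -- canonical boundary solution
  have hP0 : (ut, qt).1 ∈ tildeXB a D I ∧ (ut, qt).2 ∈ D '' tildeXB a D I ∧
      (∀ v ∈ tildeXBd a D I, a (ut, qt).1 v - ⟪(ut, qt).2, D v⟫ = L v) ∧
      (∀ r ∈ D '' tildeXBd a D I, ⟪r, D (ut, qt).1⟫ = 0) := by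
    refine ⟨hutXB, ⟨xw, hxwXB, rfl⟩, ?_, ?_⟩
    · intro v hv
      have e0 := hX1 v
      have e1 : a ut v = a uX v - a i₀ v := by rw [hutdef, map_sub]; rfl
      have e2 : a i₀ v = 0 := hv.1 i₀ hi₀I hDi₀
      have e3 : ⟪qX, D v⟫ = ⟪qI, D v⟫ + ⟪qt, D v⟫ := by
        rw [hqsum, inner_add_left]
      have e4 : ⟪qI, D v⟫ = 0 := by
        rw [hqIdef, real_inner_comm]
        exact hv.2 iw hiwI
      rw [e1, e2, sub_zero]
      linarith
    · intro r hr
      rw [hDut, inner_zero_right]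
  have hEU1 : ∃! p : V × Q,
      p.1 ∈ tildeXB a D I ∧ p.2 ∈ D '' tildeXB a D I ∧
      (∀ v ∈ tildeXBd a D I, a p.1 v - ⟪p.2, D v⟫ = L v) ∧
      (∀ r ∈ D '' tildeXBd a D I, ⟪r, D p.1⟫ = 0) := by
    refine ⟨(ut, qt), hP0, ?_⟩
    rintro ⟨u', q'⟩ ⟨hp1, hp2, hp3, hp4⟩
    have hmem1 : u' - ut ∈ tildeXB a D I := tildeXB_sub a D I hp1 hutXB
    have hmem2 : q' - qt ∈ D '' tildeXB a D I := by
      obtain ⟨x1, hx1, rfl⟩ := hp2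
      exact ⟨x1 - xw, tildeXB_sub a D I hx1 hxwXB, by rw [map_sub]⟩
    have hh1 : ∀ v ∈ tildeXBd a D I, a (u' - ut) v - ⟪q' - qt, D v⟫ = 0 := by
      intro v hv
      have e1 := hp3 v hv
      have e2 := hP0.2.2.1 v hv
      have e3 : a (u' - ut) v = a u' v - a ut v := by rw [map_sub]; rfl
      rw [e3, inner_sub_left]
      linarith
    have hh2 : ∀ r ∈ D '' tildeXBd a D I, ⟪r, D (u' - ut)⟫ = 0 := by
      intro r hr
      have e1 := hp4 r hr
      have e2 := hP0.2.2.2 r hr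
      rw [map_sub, inner_sub_right]
      linarith
    obtain ⟨hu0, hq0⟩ := bnd_homog a ha0 D I (u' - ut) (q' - qt) hmem1 hmem2 hh1 hh2
    have : u' = ut := sub_eq_zero.mp hu0
    have : q' = qt := sub_eq_zero.mp hq0
    exact Prod.ext (sub_eq_zero.mp hu0) (sub_eq_zero.mp hq0)
  have hEU2 : ∀ ut' : V,
      ∃! p : V × Q,
        p.1 ∈ I ∧ p.2 ∈ D '' (I : Set V) ∧
        (∀ v ∈ I, a p.1 v - ⟪p.2, D v⟫ = L v - a ut' v) ∧
        (∀ r ∈ D '' (I : Set V), ⟪r, D p.1⟫ = 0) := by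
    intro ut'
    set F : V →ₗ[ℝ] ℝ := L - a ut' with hFdef
    obtain ⟨u, huI, hDu, huEq⟩ := solveN a ha0 D I F
    set G : V →ₗ[ℝ] ℝ := a u - F with hGdef
    have hG : ∀ z ∈ I, D z = 0 → G z = 0 := by
      intro z hz hDz
      have := huEq z hz hDz
      simp only [hGdef, LinearMap.sub_apply]
      linarith
    obtain ⟨q, hqmem, hqeq⟩ := solveQ D I G hG
    have hPint : ∀ v ∈ I, a u v - ⟪q, D v⟫ = L v - a ut' v := by
      intro v hv
      have e1 := hqeq v hv
      simp only [hGdef, hFdef, LinearMap.sub_apply] at e1 ⊢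
      linarith
    refine ⟨(u, q), ⟨huI, hqmem, hPint, fun r hr => by rw [hDu, inner_zero_right]⟩, ?_⟩
    rintro ⟨u', q'⟩ ⟨hp1, hp2, hp3, hp4⟩
    have hmem1 : u' - u ∈ I := Submodule.sub_mem I hp1 huI
    have hmem2 : q' - q ∈ D '' (I : Set V) := by
      obtain ⟨x1, hx1, rfl⟩ := hp2
      obtain ⟨x2, hx2, rfl⟩ := hqmem
      exact ⟨x1 - x2, Submodule.sub_mem I hx1 hx2, by rw [map_sub]⟩
    have hh1 : ∀ v ∈ I, a (u' - u) v - ⟪q' - q, D v⟫ = 0 := by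
      intro v hv
      have e1 := hp3 v hv
      have e2 := hPint v hv
      have e3 : a (u' - u) v = a u' v - a u v := by rw [map_sub]; rfl
      rw [e3, inner_sub_left]
      linarith
    have hh2 : ∀ r ∈ D '' (I : Set V), ⟪r, D (u' - u)⟫ = 0 := by
      intro r hr
      have e1 := hp4 r hr
      have e2 : ⟪r, D u⟫ = 0 := by rw [hDu, inner_zero_right]
      rw [map_sub, inner_sub_right]
      linarith
    obtain ⟨hu0, hq0⟩ := int_homog a ha0 D I (u' - u) (q' - q) hmem1 hmem2 hh1 hh2
    exact Prod.ext (sub_eq_zero.mp hu0) (sub_eq_zero.mp hq0)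
  refine ⟨hEU1, hEU2, ?_⟩
  intro ut' uI' qt' qI' hB hI
  -- the boundary solution is the canonical one
  have hBeq : ((ut' , qt') : V × Q) = (ut, qt) := hEU1.unique hB hP0
  have hut' : ut' = ut := congrArg Prod.fst hBeq
  have hqt' : qt' = qt := congrArg Prod.snd hBeq
  -- the canonical interior solution for `ut`
  have hPI : ((i₀, qI) : V × Q).1 ∈ I ∧ ((i₀, qI) : V × Q).2 ∈ D '' (I : Set V) ∧
      (∀ v ∈ I, a ((i₀, qI) : V × Q).1 v - ⟪((i₀, qI) : V × Q).2, D v⟫ = L v - a ut v) ∧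
      (∀ r ∈ D '' (I : Set V), ⟪r, D ((i₀, qI) : V × Q).1⟫ = 0) := by
    refine ⟨hi₀I, ⟨iw, hiwI, rfl⟩, ?_, fun r hr => by
      simp only; rw [hDi₀, inner_zero_right]⟩
    intro v hv
    have e0 := hX1 v
    have e1 : a ut v = a uX v - a i₀ v := by rw [hutdef, map_sub]; rfl
    have e3 : ⟪qX, D v⟫ = ⟪qI, D v⟫ + ⟪qt, D v⟫ := by rw [hqsum, inner_add_left]
    have e4 : ⟪qt, D v⟫ = 0 := hxwXB.2 v hv
    simp only
    rw [e1]
    linarith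
  have hIeq : ((uI', qI') : V × Q) = (i₀, qI) := by
    refine (hEU2 ut).unique ?_ hPI
    rw [← hut']
    exact hI
  have huI' : uI' = i₀ := congrArg Prod.fst hIeq
  have hqI' : qI' = qI := congrArg Prod.snd hIeq
  constructor
  · rw [hut', huI', hutdef]; abel
  · rw [hqt', hqI', hqsum]; abel
end

section
/- Adjoint identity for the Stokes bilinear form: define s(u, q; v, r) := a(u,v) − ⟨q, Dv⟩ − ⟨r, Du⟩. Then for all u, v ∈ V and q, r ∈ Q, s(Su, 𝕢u + Π_I^⊥q; v, r) = s(u, q; S†v, 𝕢†v + Π_I^⊥r), where (Su, 𝕢u) and (S†v, 𝕢†v) are the Stokes extension and adjoint Stokes extension pairs and Π_I^⊥ is the orthogonal complement projection of D(I) in Q. -/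
open scoped RealInnerProductSpace

/-!
Both sides equal `a(Su, S†v) - ⟪q, D S†v⟫ - ⟪r, D Su⟫`. The `a`-terms reduce to `a(Su, S†v)` by
testing the equation of each extension with the difference `v - S†v` resp. `Su - u` in `I`; the
adjoint extension is the Stokes extension for the transposed form `a.flip`. The pressure terms
match because `D Su` and `D S†v` are the components of `D u` and `D v` orthogonal to `D(I)`.
-/

theorem inner_sub_starProjection_eq_of_sub_mem {Q : Type*} [NormedAddCommGroup Q]
    [InnerProductSpace ℝ Q] (J : Submodule ℝ Q) [J.HasOrthogonalProjection] {q x y : Q}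
    (hy : y ∈ Jᗮ) (hxy : x - y ∈ J) :
    ⟪q - J.starProjection q, x⟫ = ⟪q, y⟫ := by
  have hx : ⟪q - J.starProjection q, x - y⟫ = 0 :=
    J.inner_left_of_mem_orthogonal hxy (J.sub_starProjection_mem_orthogonal q)
  have hq : ⟪J.starProjection q, y⟫ = 0 :=
    J.inner_right_of_mem_orthogonal (J.starProjection_apply_mem q) hy
  rw [inner_sub_right, sub_eq_zero] at hx
  rw [hx, inner_sub_left, hq, sub_zero]

theorem stokes_apply_sub_inner_eq {V Q : Type*} [AddCommGroup V] [Module ℝ V]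
    [NormedAddCommGroup Q] [InnerProductSpace ℝ Q] {a : V →ₗ[ℝ] V →ₗ[ℝ] ℝ} {D : V →ₗ[ℝ] Q}
    {I : Submodule ℝ V} {Su v Sdv : V} {qu : Q} (hqu : qu ∈ I.map D)
    (hSu : ∀ w ∈ I, a Su w - ⟪qu, D w⟫ = 0) (hSdv_sub : Sdv - v ∈ I)
    (hSdv_orth : ∀ s ∈ I.map D, ⟪s, D Sdv⟫ = 0) :
    a Su v - ⟪qu, D v⟫ = a Su Sdv := by
  have h := hSu (v - Sdv) (sub_mem_comm_iff.1 hSdv_sub)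
  rw [map_sub, map_sub, inner_sub_right, hSdv_orth qu hqu] at h
  linarith

theorem stokes_adjoint_identity_general {V Q : Type*}
    [NormedAddCommGroup V] [InnerProductSpace ℝ V]
    [NormedAddCommGroup Q] [InnerProductSpace ℝ Q] [FiniteDimensional ℝ Q]
    (a : V →ₗ[ℝ] V →ₗ[ℝ] ℝ)
    (D : V →ₗ[ℝ] Q) (I : Submodule ℝ V)
    (u v : V) (q r : Q)
    (Su : V) (qu : Q)
    (hqu : qu ∈ Submodule.map D I) (hSu0 : Su - u ∈ I)
    (hSu1 : ∀ w ∈ I, a Su w - ⟪qu, D w⟫ = 0)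
    (hSu2 : ∀ s ∈ Submodule.map D I, ⟪s, D Su⟫ = 0)
    (Sdv : V) (qdv : Q)
    (hqdv : qdv ∈ Submodule.map D I) (hSdv0 : Sdv - v ∈ I)
    (hSdv1 : ∀ w ∈ I, a w Sdv - ⟪qdv, D w⟫ = 0)
    (hSdv2 : ∀ s ∈ Submodule.map D I, ⟪s, D Sdv⟫ = 0) :
    a Su v - ⟪qu + (q - (Submodule.orthogonalProjection (Submodule.map D I) q : Q)), D v⟫
      - ⟪r, D Su⟫ =
    a u Sdv - ⟪q, D Sdv⟫
      - ⟪qdv + (r - (Submodule.orthogonalProjection (Submodule.map D I) r : Q)), D u⟫ := by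
  set J := Submodule.map D I
  have hDSu : D Su ∈ Jᗮ := (J.mem_orthogonal _).2 hSu2
  have hDSdv : D Sdv ∈ Jᗮ := (J.mem_orthogonal _).2 hSdv2
  have hu : D u - D Su ∈ J := by
    rw [← map_sub]; exact Submodule.mem_map_of_mem (sub_mem_comm_iff.1 hSu0)
  have hv : D v - D Sdv ∈ J := by
    rw [← map_sub]; exact Submodule.mem_map_of_mem (sub_mem_comm_iff.1 hSdv0)
  have hprimal : a Su v - ⟪qu, D v⟫ = a Su Sdv :=
    stokes_apply_sub_inner_eq hqu hSu1 hSdv0 hSdv2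
  have hadjoint : a u Sdv - ⟪qdv, D u⟫ = a Su Sdv :=
    stokes_apply_sub_inner_eq (a := a.flip) hqdv hSdv1 hSu0 hSu2
  simp only [← Submodule.starProjection_apply]
  rw [inner_add_left, inner_add_left, inner_sub_starProjection_eq_of_sub_mem J hDSdv hv,
    inner_sub_starProjection_eq_of_sub_mem J hDSu hu]
  linarith

/-- adjoint identity for the Stokes bilinear form
`s(Su, 𝕢u + Π_I^⊥ q; v, r) = s(u, q; S†v, 𝕢†v + Π_I^⊥ r)`, where
`s(u, q; v, r) = a(u,v) − ⟨q, Dv⟩ − ⟨r, Du⟩`. -/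
theorem stokes_adjoint_identity {V Q : Type*}
    [NormedAddCommGroup V] [InnerProductSpace ℝ V] [FiniteDimensional ℝ V]
    [NormedAddCommGroup Q] [InnerProductSpace ℝ Q] [FiniteDimensional ℝ Q]
    (a : V →ₗ[ℝ] V →ₗ[ℝ] ℝ) (α : ℝ) (hα : 0 < α)
    (hcoer : ∀ w : V, α * ‖w‖ ^ 2 ≤ a w w)
    (D : V →ₗ[ℝ] Q) (I : Submodule ℝ V)
    (u v : V) (q r : Q)
    (Su : V) (qu : Q)
    (hqu : qu ∈ Submodule.map D I) (hSu0 : Su - u ∈ I)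
    (hSu1 : ∀ w ∈ I, a Su w - ⟪qu, D w⟫ = 0)
    (hSu2 : ∀ s ∈ Submodule.map D I, ⟪s, D Su⟫ = 0)
    (Sdv : V) (qdv : Q)
    (hqdv : qdv ∈ Submodule.map D I) (hSdv0 : Sdv - v ∈ I)
    (hSdv1 : ∀ w ∈ I, a w Sdv - ⟪qdv, D w⟫ = 0)
    (hSdv2 : ∀ s ∈ Submodule.map D I, ⟪s, D Sdv⟫ = 0) :
    a Su v - ⟪qu + (q - (Submodule.orthogonalProjection (Submodule.map D I) q : Q)), D v⟫
      - ⟪r, D Su⟫ =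
    a u Sdv - ⟪q, D Sdv⟫
      - ⟪qdv + (r - (Submodule.orthogonalProjection (Submodule.map D I) r : Q)), D u⟫ :=
  stokes_adjoint_identity_general a D I u v q r Su qu hqu hSu0 hSu1 hSu2 Sdv qdv hqdv hSdv0 hSdv1
    hSdv2
end
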